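/- arXiv:math/0004077 — 5 statements merged into one kernel-verified Lean document; each statement's English description precedes it below -/
import Mathlib

section
/- If A, B ∈ M_d(ℂ) are Hermitian and A ≤ B in the Loewner order (i.e. B − A is positive semidefinite), then Tr(exp A) ≤ Tr(exp B). (This monotonicity of the trace exponential is the key step in the paper's proof that H ≤ K implies P_α(H) ≥ P_α(K) for the pressure.) -/
open Matrix NormedSpace
open scoped ComplexOrder

private lemma exp_conj_unitary {d : ℕ} (U D : Matrix (Fin d) (Fin d) ℂ)
    (h1 : U * star U = 1) (h2 : star U * U = 1) :
    NormedSpace.exp (U * D * star U) = U * NormedSpace.exp D * star U :=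
  Matrix.exp_units_conj (⟨U, star U, h1, h2⟩ : (Matrix (Fin d) (Fin d) ℂ)ˣ) D

private lemma trace_exp_eq {d : ℕ} (A : Matrix (Fin d) (Fin d) ℂ) (hA : A.IsHermitian) :
    (NormedSpace.exp A).trace = ∑ i, (Real.exp (hA.eigenvalues i) : ℂ) := by
  set U : Matrix (Fin d) (Fin d) ℂ := (hA.eigenvectorUnitary : Matrix (Fin d) (Fin d) ℂ)
  have h1 : U * star U = 1 := (Matrix.mem_unitaryGroup_iff).mp hA.eigenvectorUnitary.2
  have h2 : star U * U = 1 := (Matrix.mem_unitaryGroup_iff').mp hA.eigenvectorUnitary.2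
  conv_lhs => rw [hA.spectral_theorem, Unitary.conjStarAlgAut_apply]
  rw [exp_conj_unitary _ _ h1 h2, Matrix.trace_mul_cycle, h2, one_mul,
    Matrix.exp_diagonal, Matrix.trace_diagonal]
  congr 1
  ext i
  simp only [Pi.exp_def, Function.comp_apply, ← Complex.exp_eq_exp_ℂ]
  exact (Complex.ofReal_exp _).symm

private lemma sum_normSq_col {d : ℕ} (W : Matrix (Fin d) (Fin d) ℂ)
    (h : star W * W = 1) (i : Fin d) : ∑ j, Complex.normSq (W j i) = 1 := by
  have h1 : (star W * W) i i = 1 := by rw [h]; simp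
  rw [Matrix.mul_apply] at h1
  refine Complex.ofReal_injective (?_ : _ = ((1:ℝ):ℂ))
  push_cast
  rw [← h1]
  refine Finset.sum_congr rfl fun j _ => ?_
  rw [Matrix.star_apply, Complex.star_def, mul_comm, Complex.mul_conj]

private lemma sum_normSq_row {d : ℕ} (W : Matrix (Fin d) (Fin d) ℂ)
    (h : W * star W = 1) (j : Fin d) : ∑ i, Complex.normSq (W j i) = 1 := by
  have h1 : (W * star W) j j = 1 := by rw [h]; simp
  rw [Matrix.mul_apply] at h1
  refine Complex.ofReal_injective (?_ : _ = ((1:ℝ):ℂ))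
  push_cast
  rw [← h1]
  refine Finset.sum_congr rfl fun i _ => ?_
  rw [Matrix.star_apply, Complex.star_def, Complex.mul_conj]

private lemma conj_diag_entry {d : ℕ} (W : Matrix (Fin d) (Fin d) ℂ) (e : Fin d → ℝ) (i : Fin d) :
    ((star W * diagonal (fun j => (e j : ℂ)) * W) i i).re
      = ∑ j, e j * Complex.normSq (W j i) := by
  rw [mul_assoc, Matrix.mul_apply]
  have key : ∀ j, (star W) i j * (diagonal (fun j => (e j : ℂ)) * W) j i
      = ((e j * Complex.normSq (W j i) : ℝ) : ℂ) := by
    intro j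
    rw [Matrix.mul_apply, Finset.sum_eq_single j
      (by intro b _ hb; simp [Matrix.diagonal_apply, Ne.symm hb]) (by simp)]
    simp only [Matrix.diagonal_apply_eq, Matrix.star_apply, Complex.star_def]
    rw [mul_comm ((e j : ℂ)) (W j i), ← mul_assoc,
      mul_comm ((starRingEnd ℂ) (W j i)) (W j i), Complex.mul_conj]
    push_cast; ring
  simp only [key]
  rw [← Complex.ofReal_sum]
  simp

private lemma psd_diag_re_nonneg {d : ℕ} {M : Matrix (Fin d) (Fin d) ℂ}
    (h : M.PosSemidef) (i : Fin d) : 0 ≤ (M i i).re := by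
  have h2 : (0 : ℂ) ≤ M i i := h.diag_nonneg
  exact (Complex.le_def.mp h2).1

/-- Monotonicity of the trace exponential: if `A ≤ B` in the Loewner order
(for Hermitian `A, B`), then `Tr(exp A) ≤ Tr(exp B)`. -/
theorem trace_exp_monotone
    (d : ℕ) (A B : Matrix (Fin d) (Fin d) ℂ)
    (hA : A.IsHermitian) (hB : B.IsHermitian) (hAB : (B - A).PosSemidef) :
    (NormedSpace.exp A).trace.re ≤ (NormedSpace.exp B).trace.re := by
  classical
  set U : Matrix (Fin d) (Fin d) ℂ := (hA.eigenvectorUnitary : Matrix (Fin d) (Fin d) ℂ) with hUdef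
  set V : Matrix (Fin d) (Fin d) ℂ := (hB.eigenvectorUnitary : Matrix (Fin d) (Fin d) ℂ) with hVdef
  set W : Matrix (Fin d) (Fin d) ℂ := star V * U with hWdef
  set lam : Fin d → ℝ := hA.eigenvalues with hlam
  set mu : Fin d → ℝ := hB.eigenvalues with hmu
  have hU1 : U * star U = 1 := (Matrix.mem_unitaryGroup_iff).mp hA.eigenvectorUnitary.2
  have hU2 : star U * U = 1 := (Matrix.mem_unitaryGroup_iff').mp hA.eigenvectorUnitary.2
  have hV1 : V * star V = 1 := (Matrix.mem_unitaryGroup_iff).mp hB.eigenvectorUnitary.2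
  have hV2 : star V * V = 1 := (Matrix.mem_unitaryGroup_iff').mp hB.eigenvectorUnitary.2
  have hW2 : star W * W = 1 := by
    rw [hWdef, Matrix.star_mul, star_star, mul_assoc, ← mul_assoc V, hV1, one_mul, hU2]
  have hW1 : W * star W = 1 := by
    rw [hWdef, Matrix.star_mul, star_star, mul_assoc, ← mul_assoc U, hU1, one_mul, hV2]
  set p : Fin d → Fin d → ℝ := fun i j => Complex.normSq (W j i) with hp
  have hp0 : ∀ i j, 0 ≤ p i j := fun i j => Complex.normSq_nonneg _
  have hpcol : ∀ i, ∑ j, p i j = 1 := fun i => sum_normSq_col W hW2 i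
  have hprow : ∀ j, ∑ i, p i j = 1 := fun j => sum_normSq_row W hW1 j
  -- diagonal entries of conjugated matrices
  have hUBU : star U * B * U = star W * diagonal (fun j => ((mu j : ℝ) : ℂ)) * W := by
    conv_lhs => rw [hB.spectral_theorem, Unitary.conjStarAlgAut_apply, ← hVdef]
    rw [hWdef, Matrix.star_mul, star_star]
    have : (RCLike.ofReal ∘ hB.eigenvalues : Fin d → ℂ) = fun j => ((mu j : ℝ) : ℂ) := rfl
    rw [this]
    noncomm_ring
  have key : ∀ i, lam i ≤ ∑ j, mu j * p i j := by
    intro i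
    have hpsd : ((star U * (B - A) * U) i i).re ≥ 0 :=
      psd_diag_re_nonneg (hAB.conjTranspose_mul_mul_same U) i
    have hsplit : star U * (B - A) * U = star U * B * U - star U * A * U := by
      noncomm_ring
    have hAdiag : (star U * A * U) i i = ((lam i : ℝ) : ℂ) := by
      have h := hA.conjStarAlgAut_star_eigenvectorUnitary
      rw [Unitary.conjStarAlgAut_apply, Unitary.coe_star, star_star] at h
      rw [h]
      simp [Matrix.diagonal_apply_eq, hlam]
    have hBre : ((star U * B * U) i i).re = ∑ j, mu j * p i j := by
      rw [hUBU]; exact conj_diag_entry W mu i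
    rw [hsplit] at hpsd
    have : ((star U * B * U) i i - (star U * A * U) i i).re ≥ 0 := by
      simpa [Matrix.sub_apply] using hpsd
    rw [Complex.sub_re, hAdiag, hBre, Complex.ofReal_re] at this
    linarith
  -- traces
  have hTA : (NormedSpace.exp A).trace.re = ∑ i, Real.exp (lam i) := by
    rw [trace_exp_eq A hA, ← Complex.ofReal_sum, Complex.ofReal_re]
  have hTB : (NormedSpace.exp B).trace.re = ∑ j, Real.exp (mu j) := by
    rw [trace_exp_eq B hB, ← Complex.ofReal_sum, Complex.ofReal_re]
  rw [hTA, hTB]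
  calc ∑ i, Real.exp (lam i) ≤ ∑ i, ∑ j, p i j * Real.exp (mu j) := by
        refine Finset.sum_le_sum fun i _ => ?_
        have h1 : Real.exp (lam i) ≤ Real.exp (∑ j, p i j • mu j) := by
          apply Real.exp_le_exp.mpr
          refine le_trans (key i) (le_of_eq ?_)
          exact Finset.sum_congr rfl fun j _ => by rw [smul_eq_mul, mul_comm]
        refine h1.trans ?_
        have := convexOn_exp.map_sum_le (t := Finset.univ) (w := p i) (p := mu)
          (fun j _ => hp0 i j) (hpcol i) (fun j _ => Set.mem_univ _)
        simpa [smul_eq_mul] using this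
    _ = ∑ j, (∑ i, p i j) * Real.exp (mu j) := by
        rw [Finset.sum_comm]
        exact Finset.sum_congr rfl fun j _ => (Finset.sum_mul _ _ _).symm
    _ = ∑ j, Real.exp (mu j) := by simp [hprow]
end

section
/- The function K ↦ log Tr(exp(−K)) is convex on the real vector space of Hermitian matrices in M_d(ℂ): for all Hermitian K₀, K₁ ∈ M_d(ℂ) and all t ∈ [0,1], log Tr(exp(−((1−t)K₀ + tK₁))) ≤ (1−t)·log Tr(exp(−K₀)) + t·log Tr(exp(−K₁)). -/
open Matrix NormedSpace

section Aux

variable {d : ℕ}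

/-- The trace of `exp A` for a Hermitian matrix `A` is the sum of exponentials of the
eigenvalues. -/
lemma trace_exp_eq_sum_exp {A : Matrix (Fin d) (Fin d) ℂ} (hA : A.IsHermitian) :
    (NormedSpace.exp A).trace = ((∑ i, Real.exp (hA.eigenvalues i) : ℝ) : ℂ) := by
  set U : Matrix (Fin d) (Fin d) ℂ := (hA.eigenvectorUnitary : Matrix (Fin d) (Fin d) ℂ) with hU
  have hU1 : U * star U = 1 := Matrix.mem_unitaryGroup_iff.mp hA.eigenvectorUnitary.2
  have hU2 : star U * U = 1 := Matrix.mem_unitaryGroup_iff'.mp hA.eigenvectorUnitary.2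
  have hUnit : IsUnit U := ⟨⟨U, star U, hU1, hU2⟩, rfl⟩
  have hinv : U⁻¹ = star U := Matrix.inv_eq_left_inv hU2
  conv_lhs => rw [hA.spectral_theorem, Unitary.conjStarAlgAut_apply, ← hinv]
  rw [show (hA.eigenvectorUnitary : Matrix (Fin d) (Fin d) ℂ) = U from rfl,
    Matrix.exp_conj U (diagonal (RCLike.ofReal ∘ hA.eigenvalues)) hUnit, Matrix.trace_mul_cycle, hinv, hU2,
    Matrix.one_mul, Matrix.exp_diagonal, Matrix.trace_diagonal]
  rw [Complex.ofReal_sum]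
  refine Finset.sum_congr rfl fun i _ => ?_
  rw [Pi.coe_exp, Function.comp_apply, ← Complex.exp_eq_exp_ℂ]
  exact (Complex.ofReal_exp _).symm

lemma trace_exp_re {A : Matrix (Fin d) (Fin d) ℂ} (hA : A.IsHermitian) :
    (NormedSpace.exp A).trace.re = ∑ i, Real.exp (hA.eigenvalues i) := by
  rw [trace_exp_eq_sum_exp hA, Complex.ofReal_re]

/-- Peierls' inequality. -/
lemma peierls {M : Matrix (Fin d) (Fin d) ℂ} (hM : M.IsHermitian) :
    ∑ i, Real.exp ((M i i).re) ≤ ∑ j, Real.exp (hM.eigenvalues j) := by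
  set U : Matrix (Fin d) (Fin d) ℂ := (hM.eigenvectorUnitary : Matrix (Fin d) (Fin d) ℂ) with hU
  have hU1 : U * star U = 1 := Matrix.mem_unitaryGroup_iff.mp hM.eigenvectorUnitary.2
  have hU2 : star U * U = 1 := Matrix.mem_unitaryGroup_iff'.mp hM.eigenvectorUnitary.2
  set w : Fin d → Fin d → ℝ := fun i j => Complex.normSq (U i j) with hw
  -- diagonal entries as convex combinations of eigenvalues
  have hdiag : ∀ i, (M i i).re = ∑ j, w i j * hM.eigenvalues j := by
    intro i
    have : M i i = ((∑ j, w i j * hM.eigenvalues j : ℝ) : ℂ) := by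
      conv_lhs => rw [hM.spectral_theorem, Unitary.conjStarAlgAut_apply]
      rw [Matrix.mul_apply, Complex.ofReal_sum]
      refine Finset.sum_congr rfl fun j _ => ?_
      rw [Matrix.mul_diagonal, Matrix.star_apply, mul_right_comm, RCLike.star_def,
        Complex.mul_conj]
      simp only [Function.comp_apply, RCLike.ofReal_alg, Complex.real_smul,
        Complex.ofReal_one, one_mul]
      push_cast
      ring
    rw [this, Complex.ofReal_re]
  -- row sums of weights are 1
  have hrow : ∀ i, ∑ j, w i j = 1 := by
    intro i
    have h1 : (U * star U) i i = 1 := by rw [hU1]; simp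
    rw [Matrix.mul_apply] at h1
    have : ((∑ j, w i j : ℝ) : ℂ) = 1 := by
      rw [← h1, Complex.ofReal_sum]
      refine Finset.sum_congr rfl fun j _ => ?_
      rw [Matrix.star_apply, RCLike.star_def, Complex.mul_conj]
    exact_mod_cast this
  -- column sums of weights are 1
  have hcol : ∀ j, ∑ i, w i j = 1 := by
    intro j
    have h1 : (star U * U) j j = 1 := by rw [hU2]; simp
    rw [Matrix.mul_apply] at h1
    have : ((∑ i, w i j : ℝ) : ℂ) = 1 := by
      rw [← h1, Complex.ofReal_sum]
      refine Finset.sum_congr rfl fun i _ => ?_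
      rw [Matrix.star_apply, RCLike.star_def, mul_comm, Complex.mul_conj]
    exact_mod_cast this
  calc ∑ i, Real.exp ((M i i).re)
      ≤ ∑ i, ∑ j, w i j * Real.exp (hM.eigenvalues j) := by
        refine Finset.sum_le_sum fun i _ => ?_
        rw [hdiag i]
        have := convexOn_exp.map_sum_le (t := Finset.univ)
          (w := w i) (p := fun j => hM.eigenvalues j)
          (fun j _ => Complex.normSq_nonneg _) (hrow i) (fun j _ => Set.mem_univ _)
        simpa [smul_eq_mul] using this
    _ = ∑ j, Real.exp (hM.eigenvalues j) := by
        rw [Finset.sum_comm]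
        refine Finset.sum_congr rfl fun j _ => ?_
        rw [← Finset.sum_mul, hcol j, one_mul]

/-- Hölder / log-sum-exp convexity for finite sums of exponentials. -/
lemma sum_exp_convex_combo_le (hd : 0 < d) (a b : Fin d → ℝ) {t : ℝ}
    (ht0 : 0 ≤ t) (ht1 : t ≤ 1) :
    ∑ i, Real.exp ((1 - t) * a i + t * b i)
      ≤ (∑ i, Real.exp (a i)) ^ (1 - t) * (∑ i, Real.exp (b i)) ^ t := by
  have hne : (Finset.univ : Finset (Fin d)).Nonempty := by
    simpa [Finset.univ_nonempty_iff] using Fin.pos_iff_nonempty.mp hd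
  set Sa : ℝ := ∑ i, Real.exp (a i) with hSa
  set Sb : ℝ := ∑ i, Real.exp (b i) with hSb
  have hSa0 : 0 < Sa := Finset.sum_pos (fun i _ => Real.exp_pos _) hne
  have hSb0 : 0 < Sb := Finset.sum_pos (fun i _ => Real.exp_pos _) hne
  have key : ∀ i, Real.exp ((1 - t) * a i + t * b i)
      ≤ Sa ^ (1 - t) * Sb ^ t * ((1 - t) * (Real.exp (a i) / Sa) + t * (Real.exp (b i) / Sb)) := by
    intro i
    have h1 : Real.exp ((1 - t) * a i + t * b i)
        = Sa ^ (1 - t) * Sb ^ t *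
          ((Real.exp (a i) / Sa) ^ (1 - t) * (Real.exp (b i) / Sb) ^ t) := by
      rw [Real.exp_add, mul_comm (1 - t) (a i), mul_comm t (b i), Real.exp_mul, Real.exp_mul,
        Real.div_rpow (Real.exp_pos _).le hSa0.le,
        Real.div_rpow (Real.exp_pos _).le hSb0.le]
      field_simp
    rw [h1]
    refine mul_le_mul_of_nonneg_left ?_ (by positivity)
    exact Real.geom_mean_le_arith_mean2_weighted (by linarith) ht0
      (by positivity) (by positivity) (by ring)
  calc ∑ i, Real.exp ((1 - t) * a i + t * b i)
      ≤ ∑ i, Sa ^ (1 - t) * Sb ^ t *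
          ((1 - t) * (Real.exp (a i) / Sa) + t * (Real.exp (b i) / Sb)) :=
        Finset.sum_le_sum fun i _ => key i
    _ = Sa ^ (1 - t) * Sb ^ t := by
        rw [← Finset.mul_sum]
        have : ∑ i, ((1 - t) * (Real.exp (a i) / Sa) + t * (Real.exp (b i) / Sb)) = 1 := by
          rw [Finset.sum_add_distrib, ← Finset.mul_sum, ← Finset.mul_sum,
            ← Finset.sum_div, ← Finset.sum_div, ← hSa, ← hSb,
            div_self hSa0.ne', div_self hSb0.ne']
          ring
        rw [this, mul_one]

end Aux

/-- Convexity of `K ↦ log Tr(exp(−K))` on Hermitian matrices. -/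
theorem log_trace_exp_neg_convex
    (d : ℕ) (K₀ K₁ : Matrix (Fin d) (Fin d) ℂ)
    (hK₀ : K₀.IsHermitian) (hK₁ : K₁.IsHermitian)
    (t : ℝ) (ht0 : 0 ≤ t) (ht1 : t ≤ 1) :
    Real.log ((NormedSpace.exp (-(((1 - t : ℝ) • K₀) + (t • K₁)))).trace.re)
      ≤ (1 - t) * Real.log ((NormedSpace.exp (-K₀)).trace.re)
        + t * Real.log ((NormedSpace.exp (-K₁)).trace.re) := by
  rcases Nat.eq_zero_or_pos d with hd | hd
  · subst hd
    simp [Matrix.trace]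
  · set A := ((1 - t : ℝ) • K₀ + t • K₁) with hAdef
    have hA : A.IsHermitian := by
      unfold Matrix.IsHermitian
      rw [hAdef, Matrix.conjTranspose_add, Matrix.conjTranspose_smul, Matrix.conjTranspose_smul,
        hK₀, hK₁]
      simp
    have hA' : (-A).IsHermitian := hA.neg
    set U : Matrix (Fin d) (Fin d) ℂ := (hA'.eigenvectorUnitary : Matrix (Fin d) (Fin d) ℂ)
      with hU
    have hU1 : U * star U = 1 := Matrix.mem_unitaryGroup_iff.mp hA'.eigenvectorUnitary.2
    have hU2 : star U * U = 1 := Matrix.mem_unitaryGroup_iff'.mp hA'.eigenvectorUnitary.2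
    have hUnit : IsUnit U := ⟨⟨U, star U, hU1, hU2⟩, rfl⟩
    have hinv : U⁻¹ = star U := Matrix.inv_eq_left_inv hU2
    set M₀ := star U * (-K₀) * U with hM₀def
    set M₁ := star U * (-K₁) * U with hM₁def
    have hM₀ : M₀.IsHermitian := by
      have : (star U : Matrix (Fin d) (Fin d) ℂ) = Uᴴ := rfl
      rw [hM₀def, this]
      exact Matrix.isHermitian_conjTranspose_mul_mul U hK₀.neg
    have hM₁ : M₁.IsHermitian := by
      have : (star U : Matrix (Fin d) (Fin d) ℂ) = Uᴴ := rfl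
      rw [hM₁def, this]
      exact Matrix.isHermitian_conjTranspose_mul_mul U hK₁.neg
    set a : Fin d → ℝ := fun j => (M₀ j j).re with ha
    set b : Fin d → ℝ := fun j => (M₁ j j).re with hb
    -- the eigenvalues of `-A` are convex combinations
    have hsplit : -A = (1 - t : ℝ) • (-K₀) + t • (-K₁) := by
      rw [hAdef]; module
    have hcomb : star U * (-A) * U = (1 - t : ℝ) • M₀ + t • M₁ := by
      rw [hsplit]
      simp only [Matrix.mul_add, Matrix.add_mul, Matrix.mul_smul, Matrix.smul_mul,
        hM₀def, hM₁def]
    have heig : ∀ j, hA'.eigenvalues j = (1 - t) * a j + t * b j := by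
      intro j
      have h1 : (diagonal (RCLike.ofReal ∘ hA'.eigenvalues) : Matrix (Fin d) (Fin d) ℂ) j j
          = ((1 - t : ℝ) • M₀ + t • M₁) j j := by
        rw [← hcomb, ← hA'.conjStarAlgAut_star_eigenvectorUnitary, Unitary.conjStarAlgAut_apply,
          Unitary.coe_star, star_star]
      rw [Matrix.diagonal_apply_eq] at h1
      have h2 := congrArg Complex.re h1
      simpa [Matrix.add_apply, Matrix.smul_apply, Complex.real_smul, Complex.add_re,
        Complex.mul_re, Complex.ofReal_re, Complex.ofReal_im, ha, hb] using h2
    -- traces are conjugation-invariant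
    have htr₀ : (NormedSpace.exp M₀).trace = (NormedSpace.exp (-K₀)).trace := by
      rw [hM₀def, ← hinv, Matrix.exp_conj' U (-K₀) hUnit, Matrix.trace_mul_cycle,
        hinv, hU1, Matrix.one_mul]
    have htr₁ : (NormedSpace.exp M₁).trace = (NormedSpace.exp (-K₁)).trace := by
      rw [hM₁def, ← hinv, Matrix.exp_conj' U (-K₁) hUnit, Matrix.trace_mul_cycle,
        hinv, hU1, Matrix.one_mul]
    -- Peierls bounds
    have hP₀ : ∑ j, Real.exp (a j) ≤ (NormedSpace.exp (-K₀)).trace.re := by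
      calc ∑ j, Real.exp (a j) ≤ ∑ j, Real.exp (hM₀.eigenvalues j) := peierls hM₀
        _ = (NormedSpace.exp M₀).trace.re := (trace_exp_re hM₀).symm
        _ = (NormedSpace.exp (-K₀)).trace.re := by rw [htr₀]
    have hP₁ : ∑ j, Real.exp (b j) ≤ (NormedSpace.exp (-K₁)).trace.re := by
      calc ∑ j, Real.exp (b j) ≤ ∑ j, Real.exp (hM₁.eigenvalues j) := peierls hM₁
        _ = (NormedSpace.exp M₁).trace.re := (trace_exp_re hM₁).symm
        _ = (NormedSpace.exp (-K₁)).trace.re := by rw [htr₁]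
    have hne : (Finset.univ : Finset (Fin d)).Nonempty := by
      simpa [Finset.univ_nonempty_iff] using Fin.pos_iff_nonempty.mp hd
    have hSa0 : 0 < ∑ j, Real.exp (a j) := Finset.sum_pos (fun i _ => Real.exp_pos _) hne
    have hSb0 : 0 < ∑ j, Real.exp (b j) := Finset.sum_pos (fun i _ => Real.exp_pos _) hne
    have hT₀ : 0 < (NormedSpace.exp (-K₀)).trace.re := lt_of_lt_of_le hSa0 hP₀
    have hT₁ : 0 < (NormedSpace.exp (-K₁)).trace.re := lt_of_lt_of_le hSb0 hP₁
    have hTr : (NormedSpace.exp (-A)).trace.re = ∑ j, Real.exp ((1 - t) * a j + t * b j) := by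
      rw [trace_exp_re hA']
      exact Finset.sum_congr rfl fun j _ => by rw [heig j]
    have hS0 : 0 < ∑ j, Real.exp ((1 - t) * a j + t * b j) :=
      Finset.sum_pos (fun i _ => Real.exp_pos _) hne
    rw [hTr]
    calc Real.log (∑ j, Real.exp ((1 - t) * a j + t * b j))
        ≤ Real.log ((∑ j, Real.exp (a j)) ^ (1 - t) * (∑ j, Real.exp (b j)) ^ t) :=
          Real.log_le_log hS0 (sum_exp_convex_combo_le hd a b ht0 ht1)
      _ ≤ Real.log (((NormedSpace.exp (-K₀)).trace.re) ^ (1 - t) * ((NormedSpace.exp (-K₁)).trace.re) ^ t) := by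
          apply Real.log_le_log (by positivity)
          exact mul_le_mul (Real.rpow_le_rpow hSa0.le hP₀ (by linarith))
            (Real.rpow_le_rpow hSb0.le hP₁ ht0) (by positivity) (by positivity)
      _ = (1 - t) * Real.log ((NormedSpace.exp (-K₀)).trace.re)
            + t * Real.log ((NormedSpace.exp (-K₁)).trace.re) := by
          rw [Real.log_mul (by positivity) (by positivity), Real.log_rpow hT₀,
            Real.log_rpow hT₁]
end

section
/- For all Hermitian matrices K, X ∈ M_d(ℂ), setting ρ_K = exp(−K)/Tr(exp(−K)), one has log Tr(exp(−(K+X))) − log Tr(exp(−K)) ≥ −Re Tr(ρ_K X). In other words, the linear functional X ↦ −Re Tr(ρ_K X) is a tangent functional at K to the convex function K ↦ log Tr(exp(−K)) on Hermitian matrices. (This fact about the Gibbs state being a tangent functional is the starting point of the paper's proof of Lemma 4.5.) -/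
open Matrix NormedSpace Finset

/-- Jensen's inequality for `Real.exp`. -/
lemma aux_jensen_exp {d : ℕ} (w c : Fin d → ℝ) (hw : ∀ i, 0 ≤ w i) (hw1 : ∑ i, w i = 1) :
    Real.exp (∑ i, w i * c i) ≤ ∑ i, w i * Real.exp (c i) := by
  have h := convexOn_exp.map_sum_le (t := Finset.univ) (w := w) (p := c)
    (fun i _ => hw i) hw1 (fun i _ => Set.mem_univ _)
  simpa [smul_eq_mul] using h

lemma aux_exp_conj {d : ℕ} (U A : Matrix (Fin d) (Fin d) ℂ) (h1 : star U * U = 1) :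
    exp (U * A * star U) = U * exp A * star U := by
  have hdet : IsUnit U.det := by
    apply IsUnit.of_mul_eq_one (star U).det
    rw [mul_comm, ← Matrix.det_mul, h1, Matrix.det_one]
  have hU : IsUnit U := (Matrix.isUnit_iff_isUnit_det U).mpr hdet
  have hinv : U⁻¹ = star U := Matrix.inv_eq_left_inv h1
  rw [← hinv, Matrix.exp_conj U A hU]

lemma aux_trace_conj {d : ℕ} (U A : Matrix (Fin d) (Fin d) ℂ) (h1 : star U * U = 1) :
    (U * A * star U).trace = A.trace := by
  rw [Matrix.trace_mul_comm, ← Matrix.mul_assoc, h1, Matrix.one_mul]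

/-- Spectral form of the matrix exponential of a Hermitian matrix. -/
lemma aux_exp_hermitian {d : ℕ} {H : Matrix (Fin d) (Fin d) ℂ} (hH : H.IsHermitian) :
    exp H = (hH.eigenvectorUnitary : Matrix (Fin d) (Fin d) ℂ)
      * diagonal (fun j => (Real.exp (hH.eigenvalues j) : ℂ))
      * star (hH.eigenvectorUnitary : Matrix (Fin d) (Fin d) ℂ) := by
  conv_lhs => rw [hH.spectral_theorem, Unitary.conjStarAlgAut_apply]
  rw [aux_exp_conj _ _ (Unitary.coe_star_mul_self hH.eigenvectorUnitary),
    Matrix.exp_diagonal]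
  have h : (exp ((RCLike.ofReal ∘ hH.eigenvalues : Fin d → ℂ)))
      = fun j => (Real.exp (hH.eigenvalues j) : ℂ) := by
    funext j
    rw [Pi.exp_def]
    simp only [Function.comp_apply, ← Complex.exp_eq_exp_ℂ, Complex.ofReal_exp]
    rfl
  rw [h]

lemma aux_entry_conj_diag {d : ℕ} (U : Matrix (Fin d) (Fin d) ℂ) (v : Fin d → ℂ) (i : Fin d) :
    (U * diagonal v * star U) i i = ∑ j, (Complex.normSq (U i j) : ℂ) * v j := by
  rw [Matrix.mul_apply]
  refine Finset.sum_congr rfl fun j _ => ?_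
  rw [Matrix.mul_diagonal, Matrix.star_apply, mul_right_comm, Complex.star_def,
    Complex.mul_conj]

lemma aux_weights {d : ℕ} (U : Matrix (Fin d) (Fin d) ℂ) (h2 : U * star U = 1) (i : Fin d) :
    ∑ j, Complex.normSq (U i j) = 1 := by
  have h : (U * star U) i i = 1 := by rw [h2, Matrix.one_apply_eq]
  rw [Matrix.mul_apply] at h
  have : ∑ j, (Complex.normSq (U i j) : ℂ) = 1 := by
    rw [← h]
    refine Finset.sum_congr rfl fun j _ => ?_
    rw [Matrix.star_apply, Complex.star_def, Complex.mul_conj]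
  exact_mod_cast this

/-- Peierls' inequality. -/
lemma aux_peierls {d : ℕ} (H : Matrix (Fin d) (Fin d) ℂ) (hH : H.IsHermitian) :
    ∑ i, Real.exp ((H i i).re) ≤ (exp H).trace.re := by
  set U : Matrix (Fin d) (Fin d) ℂ := (hH.eigenvectorUnitary : Matrix (Fin d) (Fin d) ℂ) with hU
  set e : Fin d → ℝ := hH.eigenvalues
  have h2 : U * star U = 1 := Unitary.coe_mul_star_self hH.eigenvectorUnitary
  have hexp : exp H = U * diagonal (fun j => (Real.exp (e j) : ℂ)) * star U :=
    aux_exp_hermitian hH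
  have htr : (exp H).trace.re = ∑ i, ∑ j, Complex.normSq (U i j) * Real.exp (e j) := by
    rw [hexp, Matrix.trace]
    rw [Complex.re_sum]
    refine Finset.sum_congr rfl fun i _ => ?_
    rw [Matrix.diag_apply, aux_entry_conj_diag, Complex.re_sum]
    refine Finset.sum_congr rfl fun j _ => ?_
    rw [← Complex.ofReal_mul]
    exact Complex.ofReal_re _
  have hHii : ∀ i, (H i i).re = ∑ j, Complex.normSq (U i j) * e j := by
    intro i
    conv_lhs => rw [hH.spectral_theorem, Unitary.conjStarAlgAut_apply]
    rw [aux_entry_conj_diag, Complex.re_sum]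
    refine Finset.sum_congr rfl fun j _ => ?_
    simp [Complex.mul_re]
    rw [hU]
    simp
    exact Or.inl rfl
  rw [htr]
  refine Finset.sum_le_sum fun i _ => ?_
  rw [hHii i]
  exact aux_jensen_exp (fun j => Complex.normSq (U i j)) e
    (fun j => Complex.normSq_nonneg _) (aux_weights U h2 i)

/-- The scalar core of the tangent-functional inequality. -/
lemma aux_final_real {d : ℕ} (a c : Fin d → ℝ) :
    Real.log (∑ i, Real.exp (a i + c i)) - Real.log (∑ i, Real.exp (a i))
      ≥ (∑ i, Real.exp (a i) * c i) / (∑ i, Real.exp (a i)) := by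
  rcases isEmpty_or_nonempty (Fin d) with h | h
  · simp
  set Z : ℝ := ∑ i, Real.exp (a i) with hZ
  have hZpos : 0 < Z := Finset.sum_pos (fun i _ => Real.exp_pos _) Finset.univ_nonempty
  set S : ℝ := ∑ i, Real.exp (a i + c i) with hS
  have hSpos : 0 < S := Finset.sum_pos (fun i _ => Real.exp_pos _) Finset.univ_nonempty
  have hw1 : ∑ i, Real.exp (a i) / Z = 1 := by
    rw [← Finset.sum_div, div_self hZpos.ne']
  have hjensen : Real.exp (∑ i, Real.exp (a i) / Z * c i)
      ≤ ∑ i, Real.exp (a i) / Z * Real.exp (c i) :=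
    aux_jensen_exp _ _ (fun i => by positivity) hw1
  have hsum : ∑ i, Real.exp (a i) / Z * Real.exp (c i) = S / Z := by
    rw [hS, Finset.sum_div]
    refine Finset.sum_congr rfl fun i _ => ?_
    rw [Real.exp_add]
    ring
  have hwc : ∑ i, Real.exp (a i) / Z * c i = (∑ i, Real.exp (a i) * c i) / Z := by
    rw [Finset.sum_div]
    refine Finset.sum_congr rfl fun i _ => ?_
    ring
  rw [ge_iff_le, ← hwc, ← Real.log_exp (∑ i, Real.exp (a i) / Z * c i),
    ← Real.log_div hSpos.ne' hZpos.ne']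
  exact Real.log_le_log (Real.exp_pos _) (hsum ▸ hjensen)

/-- The Gibbs state `ρ_K = exp(−K)/Tr(exp(−K))` defines a tangent functional
`X ↦ −Re Tr(ρ_K X)` at `K` to the convex function `K ↦ log Tr(exp(−K))` on Hermitian
matrices: `log Tr(exp(−(K+X))) − log Tr(exp(−K)) ≥ −Re Tr(ρ_K X)`. -/
theorem gibbs_state_tangent_functional
    (d : ℕ) (K X : Matrix (Fin d) (Fin d) ℂ)
    (hK : K.IsHermitian) (hX : X.IsHermitian) :
    Real.log ((exp (-(K + X))).trace.re) - Real.log ((exp (-K)).trace.re)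
      ≥ -(((((exp (-K)).trace)⁻¹ • exp (-K)) * X).trace).re := by
  rcases Nat.eq_zero_or_pos d with hd | hd
  · subst hd
    simp [Matrix.trace]
  have hne : Nonempty (Fin d) := ⟨⟨0, hd⟩⟩
  have hA : (-K).IsHermitian := hK.neg
  set U : Matrix (Fin d) (Fin d) ℂ := (hA.eigenvectorUnitary : Matrix (Fin d) (Fin d) ℂ)
    with hUdef
  set a : Fin d → ℝ := hA.eigenvalues with hadef
  have h1 : star U * U = 1 := Unitary.coe_star_mul_self hA.eigenvectorUnitary
  have h2 : U * star U = 1 := Unitary.coe_mul_star_self hA.eigenvectorUnitary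
  set M : Matrix (Fin d) (Fin d) ℂ := star U * X * U with hMdef
  set c : Fin d → ℝ := fun i => -((M i i).re) with hcdef
  set Z : ℝ := ∑ i, Real.exp (a i) with hZdef
  have hZpos : 0 < Z := Finset.sum_pos (fun i _ => Real.exp_pos _) Finset.univ_nonempty
  have hexpA : exp (-K) = U * diagonal (fun j => (Real.exp (a j) : ℂ)) * star U :=
    aux_exp_hermitian hA
  have htrA : (exp (-K)).trace = (Z : ℂ) := by
    rw [hexpA, aux_trace_conj _ _ h1, Matrix.trace_diagonal, hZdef]
    push_cast
    rfl
  have htrdiag : ∀ (N : Matrix (Fin d) (Fin d) ℂ) (v : Fin d → ℂ),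
      (N * diagonal v).trace = ∑ i, N i i * v i := by
    intro N v
    rw [Matrix.trace]
    exact Finset.sum_congr rfl fun i _ => by rw [Matrix.diag_apply, Matrix.mul_diagonal]
  have htrAX : ((exp (-K)) * X).trace = ∑ i, (Real.exp (a i) : ℂ) * M i i := by
    rw [hexpA, Matrix.mul_assoc (U * diagonal fun j => ((Real.exp (a j) : ℝ) : ℂ)) (star U) X,
      Matrix.trace_mul_comm, ← Matrix.mul_assoc, htrdiag]
    exact Finset.sum_congr rfl fun i _ => mul_comm _ _
  -- diagonal matrix of eigenvalues
  set D : Matrix (Fin d) (Fin d) ℂ := diagonal (fun j => ((a j : ℝ) : ℂ)) with hDdef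
  have hD : D.IsHermitian := by
    rw [Matrix.IsHermitian, hDdef, Matrix.diagonal_conjTranspose]
    congr 1
    funext j
    simp [Pi.star_def, Complex.conj_ofReal]
  have hM : M.IsHermitian := by
    rw [hMdef, Matrix.star_eq_conjTranspose]
    exact Matrix.isHermitian_conjTranspose_mul_mul U hX
  have hDeq : D = diagonal (RCLike.ofReal ∘ hA.eigenvalues) := by
    rw [hDdef]
    rfl
  have hUDU : U * D * star U = -K := by
    rw [hDeq]
    exact hA.spectral_theorem.symm
  have hUMU : U * M * star U = X := by
    have hassoc : U * (star U * X * U) * star U = (U * star U) * X * (U * star U) := by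
      simp only [Matrix.mul_assoc]
    rw [hMdef, hassoc, h2, Matrix.one_mul, Matrix.mul_one]
  have hconj : -(K + X) = U * (D - M) * star U := by
    rw [Matrix.mul_sub, Matrix.sub_mul, hUDU, hUMU, neg_add, sub_eq_add_neg]
  have hDM : (D - M).IsHermitian := hD.sub hM
  have htrKX : (exp (-(K + X))).trace = (exp (D - M)).trace := by
    rw [hconj, aux_exp_conj _ _ h1, aux_trace_conj _ _ h1]
  -- Peierls bound
  have hP : ∑ i, Real.exp (a i + c i) ≤ (exp (-(K + X))).trace.re := by
    rw [htrKX]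
    refine le_trans (le_of_eq ?_) (aux_peierls (D - M) hDM)
    refine Finset.sum_congr rfl fun i _ => ?_
    congr 1
    rw [Matrix.sub_apply, Complex.sub_re, hDdef, Matrix.diagonal_apply_eq, Complex.ofReal_re,
      hcdef]
    ring
  have hSpos : 0 < ∑ i, Real.exp (a i + c i) :=
    Finset.sum_pos (fun i _ => Real.exp_pos _) Finset.univ_nonempty
  have hlog : Real.log (∑ i, Real.exp (a i + c i)) ≤ Real.log ((exp (-(K + X))).trace.re) :=
    Real.log_le_log hSpos hP
  have hfin := aux_final_real a c
  -- identify the right-hand side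
  have hRHS : -(((((exp (-K)).trace)⁻¹ • exp (-K)) * X).trace).re
      = (∑ i, Real.exp (a i) * c i) / Z := by
    rw [Matrix.smul_mul, Matrix.trace_smul, htrA, htrAX]
    simp only [smul_eq_mul, ← Complex.ofReal_inv, Complex.mul_re, Complex.ofReal_re,
      Complex.ofReal_im, zero_mul, sub_zero, Complex.re_sum]
    have hsum : ∑ i, Real.exp (a i) * c i = -∑ i, Real.exp (a i) * (M i i).re := by
      rw [← Finset.sum_neg_distrib]
      exact Finset.sum_congr rfl fun i _ => by rw [hcdef]; ring
    rw [hsum, neg_div, div_eq_inv_mul]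
  rw [← hZdef] at hfin
  rw [hRHS, htrA, Complex.ofReal_re]
  linarith [hlog, hfin]
end

section
/- Let H be a complex Hilbert space and U : H → H a unitary operator such that ⟨Uⁿf, g⟩ → 0 as n → ∞ for all f, g ∈ H. Let φ be a continuous linear functional on the bounded operators B(H) such that φ(T) is a nonnegative real whenever T is a positive operator, and φ(U T U⁻¹) = φ(T) for all T ∈ B(H). Then φ(T) = 0 for every compact operator T on H. (This is the content of the paper's Example 5.4: for the bilateral shift U on a separable Hilbert space, the only Ad U-invariant state on K(H) + ℂ1 is the trace annihilating K(H).) -/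
open scoped ComplexOrder InnerProductSpace
open Finset

section Aux

variable {H : Type*} [NormedAddCommGroup H] [InnerProductSpace ℂ H]

/-- The rank-one operator `x ↦ ⟪g, x⟫ • f`. -/
noncomputable def rk1 (f g : H) : H →L[ℂ] H :=
  (ContinuousLinearMap.toSpanSingleton ℂ f).comp (innerSL ℂ g)

lemma rk1_apply (f g x : H) : rk1 f g x = ⟪g, x⟫_ℂ • f := rfl

lemma conj_rk1 (U : H ≃ₗᵢ[ℂ] H) (a b : H) :
    (U : H →L[ℂ] H) ∘L (rk1 a b) ∘L ((U.symm : H ≃ₗᵢ[ℂ] H) : H →L[ℂ] H)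
      = rk1 (U a) (U b) := by
  ext x
  have hx : ((U.symm : H ≃ₗᵢ[ℂ] H) : H →L[ℂ] H) x = U.symm x := rfl
  simp only [ContinuousLinearMap.comp_apply, rk1_apply, hx,
    LinearIsometryEquiv.coe_coe, map_smul]
  congr 1
  rw [← U.inner_map_map b (U.symm x), U.apply_symm_apply]

lemma pow_pair_bound (U : H ≃ₗᵢ[ℂ] H) (f : H) (n m : ℕ) :
    ‖⟪(U ^ n) f, (U ^ m) f⟫_ℂ‖ = ‖⟪(U ^ (Nat.dist n m)) f, f⟫_ℂ‖ := by
  have key : ∀ a k : ℕ, ⟪(U ^ a) f, (U ^ (a + k)) f⟫_ℂ = ⟪f, (U ^ k) f⟫_ℂ := by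
    intro a k
    have : (U ^ (a + k)) f = (U ^ a) ((U ^ k) f) := by
      rw [pow_add]; rfl
    rw [this, (U ^ a).inner_map_map]
  rcases le_total n m with h | h
  · obtain ⟨k, rfl⟩ := Nat.exists_eq_add_of_le h
    rw [key, Nat.dist_eq_sub_of_le (Nat.le_add_right n k), Nat.add_sub_cancel_left,
      ← inner_conj_symm]
    exact RCLike.norm_conj _
  · obtain ⟨k, rfl⟩ := Nat.exists_eq_add_of_le h
    rw [← inner_conj_symm, key, RCLike.norm_conj,
      Nat.dist_eq_sub_of_le_right (Nat.le_add_right m k),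
      Nat.add_sub_cancel_left, ← inner_conj_symm, RCLike.norm_conj]

lemma dist_sum_le (γ : ℕ → ℝ) (hγ : ∀ k, 0 ≤ γ k) {n N : ℕ} (hn : n < N) :
    ∑ m ∈ range N, γ (Nat.dist n m) ≤ 2 * ∑ k ∈ range N, γ k := by
  rw [Finset.range_eq_Ico, ← Finset.sum_Ico_consecutive _ (Nat.zero_le n) hn.le]
  have h2 : ∑ m ∈ Finset.Ico n N, γ (Nat.dist n m) ≤ ∑ k ∈ range N, γ k := by
    rw [Finset.sum_Ico_eq_sum_range]
    calc ∑ i ∈ range (N - n), γ (Nat.dist n (n + i))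
        = ∑ i ∈ range (N - n), γ i := by
          refine Finset.sum_congr rfl fun i _ => ?_
          congr 1
          rw [Nat.dist_eq_sub_of_le (Nat.le_add_right n i)]
          omega
      _ ≤ ∑ k ∈ range N, γ k := by
          apply Finset.sum_le_sum_of_subset_of_nonneg
          · exact Finset.range_subset_range.2 (Nat.sub_le N n)
          · intro i _ _; exact hγ i
  have h1 : ∑ m ∈ Finset.Ico 0 n, γ (Nat.dist n m) ≤ ∑ k ∈ range N, γ k := by
    rw [← Finset.range_eq_Ico]
    have e1 : ∑ m ∈ range n, γ (Nat.dist n m) = ∑ m ∈ range n, γ (n - m) := by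
      refine Finset.sum_congr rfl fun m hm => ?_
      congr 1
      exact Nat.dist_eq_sub_of_le_right (Nat.le_of_lt (Finset.mem_range.1 hm))
    rw [e1]
    calc ∑ m ∈ range n, γ (n - m) ≤ ∑ m ∈ range (n+1), γ (n - m) := by
          apply Finset.sum_le_sum_of_subset_of_nonneg
          · exact Finset.range_subset_range.2 (Nat.le_succ n)
          · intro i _ _; exact hγ _
      _ = ∑ k ∈ range (n+1), γ k := by
          calc ∑ m ∈ range (n+1), γ (n - m)
              = ∑ m ∈ range (n+1), γ (n + 1 - 1 - m) := by
                refine Finset.sum_congr rfl fun m _ => by congr 1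
            _ = ∑ k ∈ range (n+1), γ k := Finset.sum_range_reflect (fun j => γ j) (n+1)
      _ ≤ ∑ k ∈ range N, γ k := by
          apply Finset.sum_le_sum_of_subset_of_nonneg
          · exact Finset.range_subset_range.2 hn
          · intro i _ _; exact hγ i
  rw [Finset.range_eq_Ico] at h1 h2
  linarith

lemma double_sum_le (β γ : ℕ → ℝ) (hβ : ∀ n, 0 ≤ β n) (hγ : ∀ k, 0 ≤ γ k) (N : ℕ) :
    ∑ n ∈ range N, ∑ m ∈ range N, β n * β m * γ (Nat.dist n m)
      ≤ (∑ n ∈ range N, (β n)^2) * (2 * ∑ k ∈ range N, γ k) := by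
  clear hβ
  have step1 : ∑ n ∈ range N, ∑ m ∈ range N, β n * β m * γ (Nat.dist n m)
      ≤ ∑ n ∈ range N, ∑ m ∈ range N,
          (((β n)^2 + (β m)^2)/2) * γ (Nat.dist n m) := by
    refine Finset.sum_le_sum fun n _ => Finset.sum_le_sum fun m _ => ?_
    apply mul_le_mul_of_nonneg_right _ (hγ _)
    nlinarith [sq_nonneg (β n - β m)]
  have hswap : ∑ n ∈ range N, ∑ m ∈ range N, (β m)^2 * γ (Nat.dist n m)
      = ∑ n ∈ range N, ∑ m ∈ range N, (β n)^2 * γ (Nat.dist n m) := by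
    rw [Finset.sum_comm]
    exact Finset.sum_congr rfl fun n _ => Finset.sum_congr rfl fun m _ => by
      rw [Nat.dist_comm]
  have step2 : ∑ n ∈ range N, ∑ m ∈ range N,
      (((β n)^2 + (β m)^2)/2) * γ (Nat.dist n m)
      = ∑ n ∈ range N, ∑ m ∈ range N, (β n)^2 * γ (Nat.dist n m) := by
    have hnm : ∀ n m, (((β n)^2 + (β m)^2)/2) * γ (Nat.dist n m)
        = ((β n)^2 * γ (Nat.dist n m) + (β m)^2 * γ (Nat.dist n m))/2 := by
      intro n m; ring
    calc ∑ n ∈ range N, ∑ m ∈ range N, (((β n)^2 + (β m)^2)/2) * γ (Nat.dist n m)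
        = ∑ n ∈ range N, ∑ m ∈ range N,
            (((β n)^2 * γ (Nat.dist n m)) + ((β m)^2 * γ (Nat.dist n m)))/2 :=
          Finset.sum_congr rfl fun n _ => Finset.sum_congr rfl fun m _ => hnm n m
      _ = ((∑ n ∈ range N, ∑ m ∈ range N, (β n)^2 * γ (Nat.dist n m))
            + (∑ n ∈ range N, ∑ m ∈ range N, (β m)^2 * γ (Nat.dist n m)))/2 := by
          simp only [← Finset.sum_div, ← Finset.sum_add_distrib]
      _ = ∑ n ∈ range N, ∑ m ∈ range N, (β n)^2 * γ (Nat.dist n m) := by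
          rw [hswap]; ring
  have step3 : ∑ n ∈ range N, ∑ m ∈ range N, (β n)^2 * γ (Nat.dist n m)
      ≤ (∑ n ∈ range N, (β n)^2) * (2 * ∑ k ∈ range N, γ k) := by
    rw [Finset.sum_mul]
    refine Finset.sum_le_sum fun n hn => ?_
    rw [← Finset.mul_sum]
    exact mul_le_mul_of_nonneg_left (dist_sum_le γ hγ (Finset.mem_range.1 hn)) (sq_nonneg _)
  linarith

lemma key_bound (b : ℕ → ℂ) (u : ℕ → H) (γ : ℕ → ℝ) (hγ : ∀ k, 0 ≤ γ k)
    (hu : ∀ n m, ‖⟪u n, u m⟫_ℂ‖ ≤ γ (Nat.dist n m)) (N : ℕ) :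
    ‖∑ n ∈ range N, b n • u n‖^2
      ≤ (∑ n ∈ range N, ‖b n‖^2) * (2 * ∑ k ∈ range N, γ k) := by
  set v := ∑ n ∈ range N, b n • u n with hv
  have h1 : (‖v‖^2 : ℝ) = ‖⟪v, v⟫_ℂ‖ := by
    rw [inner_self_eq_norm_sq_to_K, norm_pow]
    simp
  rw [h1]
  have h2 : ⟪v, v⟫_ℂ = ∑ n ∈ range N, ∑ m ∈ range N,
      (starRingEnd ℂ) (b n) * (b m * ⟪u n, u m⟫_ℂ) := by
    rw [hv, sum_inner]
    refine Finset.sum_congr rfl fun n _ => ?_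
    rw [inner_sum]
    refine Finset.sum_congr rfl fun m _ => ?_
    rw [inner_smul_left, inner_smul_right]
  rw [h2]
  calc ‖∑ n ∈ range N, ∑ m ∈ range N, (starRingEnd ℂ) (b n) * (b m * ⟪u n, u m⟫_ℂ)‖
      ≤ ∑ n ∈ range N, ∑ m ∈ range N, ‖b n‖ * ‖b m‖ * γ (Nat.dist n m) := by
        refine (norm_sum_le _ _).trans (Finset.sum_le_sum fun n _ => ?_)
        refine (norm_sum_le _ _).trans (Finset.sum_le_sum fun m _ => ?_)
        rw [norm_mul, norm_mul, RingHomIsometric.norm_map, ← mul_assoc]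
        exact mul_le_mul_of_nonneg_left (hu n m) (by positivity)
    _ ≤ (∑ n ∈ range N, ‖b n‖^2) * (2 * ∑ k ∈ range N, γ k) :=
        double_sum_le _ _ (fun n => norm_nonneg _) hγ N

lemma gram_bound (g : ℕ → H) (γ : ℕ → ℝ) (hγ : ∀ k, 0 ≤ γ k)
    (hg : ∀ n m, ‖⟪g n, g m⟫_ℂ‖ ≤ γ (Nat.dist n m)) (N : ℕ) (x : H) :
    ∑ n ∈ range N, ‖⟪g n, x⟫_ℂ‖^2 ≤ (2 * ∑ k ∈ range N, γ k) * ‖x‖^2 := by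
  set b : ℕ → ℂ := fun n => ⟪g n, x⟫_ℂ with hb
  set S := ∑ n ∈ range N, ‖b n‖^2 with hSdef
  set v := ∑ n ∈ range N, b n • g n with hvdef
  have hS0 : 0 ≤ S := Finset.sum_nonneg fun n _ => by positivity
  have hvx : ⟪v, x⟫_ℂ = (S : ℂ) := by
    rw [hvdef, sum_inner, hSdef]
    push_cast
    refine Finset.sum_congr rfl fun n _ => ?_
    rw [inner_smul_left, show ⟪g n, x⟫_ℂ = b n from rfl, RCLike.conj_mul]
    norm_cast
  have hS_le : S ≤ ‖v‖ * ‖x‖ := by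
    have : S = ‖⟪v, x⟫_ℂ‖ := by rw [hvx]; simp [abs_of_nonneg hS0]
    rw [this]; exact norm_inner_le_norm v x
  have hv2 : ‖v‖^2 ≤ S * (2 * ∑ k ∈ range N, γ k) :=
    key_bound b g γ hγ hg N
  have hG0 : 0 ≤ 2 * ∑ k ∈ range N, γ k :=
    mul_nonneg (by norm_num) (Finset.sum_nonneg fun k _ => hγ k)
  have h4 : S * S ≤ S * ((2 * ∑ k ∈ range N, γ k) * ‖x‖^2) := by
    calc S * S ≤ (‖v‖ * ‖x‖) * (‖v‖ * ‖x‖) :=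
          mul_le_mul hS_le hS_le hS0 (mul_nonneg (norm_nonneg v) (norm_nonneg x))
      _ = ‖v‖^2 * ‖x‖^2 := by ring
      _ ≤ (S * (2 * ∑ k ∈ range N, γ k)) * ‖x‖^2 :=
          mul_le_mul_of_nonneg_right hv2 (sq_nonneg _)
      _ = S * ((2 * ∑ k ∈ range N, γ k) * ‖x‖^2) := by ring
  rcases hS0.eq_or_lt with h | h
  · rw [← h]; exact mul_nonneg hG0 (sq_nonneg _)
  · exact (mul_le_mul_iff_right₀ h).mp h4

lemma rk1_sum_opnorm (f g : ℕ → H) (γf γg : ℕ → ℝ)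
    (hγf : ∀ k, 0 ≤ γf k) (hγg : ∀ k, 0 ≤ γg k)
    (hf : ∀ n m, ‖⟪f n, f m⟫_ℂ‖ ≤ γf (Nat.dist n m))
    (hg : ∀ n m, ‖⟪g n, g m⟫_ℂ‖ ≤ γg (Nat.dist n m)) (N : ℕ) :
    ‖∑ n ∈ range N, rk1 (f n) (g n)‖
      ≤ Real.sqrt ((2 * ∑ k ∈ range N, γg k) * (2 * ∑ k ∈ range N, γf k)) := by
  refine ContinuousLinearMap.opNorm_le_bound _ (Real.sqrt_nonneg _) fun x => ?_
  have hAx : (∑ n ∈ range N, rk1 (f n) (g n)) x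
      = ∑ n ∈ range N, (⟪g n, x⟫_ℂ) • f n := by
    simp [ContinuousLinearMap.sum_apply, rk1_apply]
  have hFpos : 0 ≤ 2 * ∑ k ∈ range N, γf k :=
    mul_nonneg (by norm_num) (Finset.sum_nonneg fun k _ => hγf k)
  have hGpos : 0 ≤ 2 * ∑ k ∈ range N, γg k :=
    mul_nonneg (by norm_num) (Finset.sum_nonneg fun k _ => hγg k)
  have h1 : ‖(∑ n ∈ range N, rk1 (f n) (g n)) x‖^2
      ≤ ((2 * ∑ k ∈ range N, γg k) * (2 * ∑ k ∈ range N, γf k)) * ‖x‖^2 := by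
    rw [hAx]
    refine (key_bound _ f γf hγf hf N).trans ?_
    calc (∑ n ∈ range N, ‖⟪g n, x⟫_ℂ‖^2) * (2 * ∑ k ∈ range N, γf k)
        ≤ ((2 * ∑ k ∈ range N, γg k) * ‖x‖^2) * (2 * ∑ k ∈ range N, γf k) :=
          mul_le_mul_of_nonneg_right (gram_bound g γg hγg hg N x) hFpos
      _ = ((2 * ∑ k ∈ range N, γg k) * (2 * ∑ k ∈ range N, γf k)) * ‖x‖^2 := by ring
  calc ‖(∑ n ∈ range N, rk1 (f n) (g n)) x‖
      = Real.sqrt (‖(∑ n ∈ range N, rk1 (f n) (g n)) x‖^2) :=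
        (Real.sqrt_sq (norm_nonneg _)).symm
    _ ≤ Real.sqrt (((2 * ∑ k ∈ range N, γg k) * (2 * ∑ k ∈ range N, γf k)) * ‖x‖^2) :=
        Real.sqrt_le_sqrt h1
    _ = Real.sqrt ((2 * ∑ k ∈ range N, γg k) * (2 * ∑ k ∈ range N, γf k)) * ‖x‖ := by
        rw [Real.sqrt_mul (mul_nonneg hGpos hFpos), Real.sqrt_sq (norm_nonneg x)]

lemma phi_rk1 (U : H ≃ₗᵢ[ℂ] H)
    (hU : ∀ f g : H, Filter.Tendsto (fun n : ℕ => (⟪(U ^ n) f, g⟫_ℂ))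
      Filter.atTop (nhds 0))
    (φ : (H →L[ℂ] H) →L[ℂ] ℂ)
    (hinv : ∀ T : H →L[ℂ] H,
      φ ((U : H →L[ℂ] H) ∘L T ∘L ((U.symm : H ≃ₗᵢ[ℂ] H) : H →L[ℂ] H)) = φ T)
    (f g : H) : φ (rk1 f g) = 0 := by
  set γf : ℕ → ℝ := fun k => ‖⟪(U ^ k) f, f⟫_ℂ‖ with hγfdef
  set γg : ℕ → ℝ := fun k => ‖⟪(U ^ k) g, g⟫_ℂ‖ with hγgdef
  have hγf0 : ∀ k, 0 ≤ γf k := fun k => norm_nonneg _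
  have hγg0 : ∀ k, 0 ≤ γg k := fun k => norm_nonneg _
  have hfb : ∀ n m, ‖⟪(U ^ n) f, (U ^ m) f⟫_ℂ‖ ≤ γf (Nat.dist n m) :=
    fun n m => le_of_eq (pow_pair_bound U f n m)
  have hgb : ∀ n m, ‖⟪(U ^ n) g, (U ^ m) g⟫_ℂ‖ ≤ γg (Nat.dist n m) :=
    fun n m => le_of_eq (pow_pair_bound U g n m)
  have hinvn : ∀ n : ℕ, φ (rk1 ((U ^ n) f) ((U ^ n) g)) = φ (rk1 f g) := by
    intro n
    induction n with
    | zero => simp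
    | succ n ih =>
      have e : ∀ z : H, (U ^ (n+1)) z = U ((U ^ n) z) := fun z => by rw [pow_succ']; rfl
      rw [show rk1 ((U ^ (n+1)) f) ((U ^ (n+1)) g)
          = rk1 (U ((U ^ n) f)) (U ((U ^ n) g)) by rw [e, e],
        ← conj_rk1 U, hinv, ih]
  have hsum : ∀ N : ℕ, (N : ℝ) * ‖φ (rk1 f g)‖
      ≤ ‖φ‖ * Real.sqrt ((2 * ∑ k ∈ range N, γg k) * (2 * ∑ k ∈ range N, γf k)) := by
    intro N
    have h1 : φ (∑ n ∈ range N, rk1 ((U ^ n) f) ((U ^ n) g))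
        = (N : ℂ) * φ (rk1 f g) := by
      rw [map_sum, Finset.sum_congr rfl fun n _ => hinvn n, Finset.sum_const,
        card_range, nsmul_eq_mul]
    have h2 := φ.le_opNorm (∑ n ∈ range N, rk1 ((U ^ n) f) ((U ^ n) g))
    rw [h1, norm_mul, Complex.norm_natCast] at h2
    exact h2.trans (mul_le_mul_of_nonneg_left
      (rk1_sum_opnorm _ _ γf γg hγf0 hγg0 hfb hgb N) (norm_nonneg φ))
  have hγftend : Filter.Tendsto γf Filter.atTop (nhds 0) := by
    have := (hU f f).norm
    simpa using this
  have hγgtend : Filter.Tendsto γg Filter.atTop (nhds 0) := by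
    have := (hU g g).norm
    simpa using this
  have hcesf := hγftend.cesaro
  have hcesg := hγgtend.cesaro
  have hprod : Filter.Tendsto
      (fun N : ℕ => (2 * ((N : ℝ)⁻¹ * ∑ k ∈ range N, γg k))
        * (2 * ((N : ℝ)⁻¹ * ∑ k ∈ range N, γf k))) Filter.atTop (nhds 0) := by
    have := (hcesg.const_mul 2).mul (hcesf.const_mul 2)
    simpa using this
  have hsqrt : Filter.Tendsto
      (fun N : ℕ => ‖φ‖ * Real.sqrt ((2 * ((N : ℝ)⁻¹ * ∑ k ∈ range N, γg k))
        * (2 * ((N : ℝ)⁻¹ * ∑ k ∈ range N, γf k)))) Filter.atTop (nhds 0) := by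
    have h := (Real.continuous_sqrt.tendsto 0).comp hprod
    rw [Real.sqrt_zero] at h
    simpa using h.const_mul ‖φ‖
  have hbound : ∀ᶠ N : ℕ in Filter.atTop, ‖φ (rk1 f g)‖
      ≤ ‖φ‖ * Real.sqrt ((2 * ((N : ℝ)⁻¹ * ∑ k ∈ range N, γg k))
        * (2 * ((N : ℝ)⁻¹ * ∑ k ∈ range N, γf k))) := by
    refine Filter.eventually_atTop.2 ⟨1, fun N hN => ?_⟩
    have hNpos : (0 : ℝ) < N := by exact_mod_cast hN
    have hrw : Real.sqrt ((2 * ((N : ℝ)⁻¹ * ∑ k ∈ range N, γg k))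
        * (2 * ((N : ℝ)⁻¹ * ∑ k ∈ range N, γf k)))
        = (N : ℝ)⁻¹ * Real.sqrt ((2 * ∑ k ∈ range N, γg k)
            * (2 * ∑ k ∈ range N, γf k)) := by
      rw [show (2 * ((N : ℝ)⁻¹ * ∑ k ∈ range N, γg k))
          * (2 * ((N : ℝ)⁻¹ * ∑ k ∈ range N, γf k))
          = ((N : ℝ)⁻¹)^2 * ((2 * ∑ k ∈ range N, γg k)
              * (2 * ∑ k ∈ range N, γf k)) by ring,
        Real.sqrt_mul (sq_nonneg _), Real.sqrt_sq (inv_nonneg.2 hNpos.le)]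
    rw [hrw]
    calc ‖φ (rk1 f g)‖ = (N : ℝ)⁻¹ * ((N : ℝ) * ‖φ (rk1 f g)‖) := by
          field_simp
      _ ≤ (N : ℝ)⁻¹ * (‖φ‖ * Real.sqrt ((2 * ∑ k ∈ range N, γg k)
            * (2 * ∑ k ∈ range N, γf k))) :=
          mul_le_mul_of_nonneg_left (hsum N) (inv_nonneg.2 hNpos.le)
      _ = ‖φ‖ * ((N : ℝ)⁻¹ * Real.sqrt ((2 * ∑ k ∈ range N, γg k)
            * (2 * ∑ k ∈ range N, γf k))) := by ring
  have hle : ‖φ (rk1 f g)‖ ≤ 0 := ge_of_tendsto hsqrt hbound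
  simpa using norm_le_zero_iff.1 hle

end Aux

/-- If `U` is a unitary on a complex Hilbert space with `⟪Uⁿ f, g⟫ → 0` for all `f, g`,
then every continuous linear functional on `B(H)` which is positive (nonnegative on
positive operators) and `Ad U`-invariant vanishes on all compact operators. -/
theorem invariant_positive_functional_vanishes_on_compacts
    {H : Type*} [NormedAddCommGroup H] [InnerProductSpace ℂ H] [CompleteSpace H]
    (U : H ≃ₗᵢ[ℂ] H)
    (hU : ∀ f g : H, Filter.Tendsto (fun n : ℕ => (⟪(U ^ n) f, g⟫_ℂ))
      Filter.atTop (nhds 0))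
    (φ : (H →L[ℂ] H) →L[ℂ] ℂ)
    (hpos : ∀ T : H →L[ℂ] H, (∀ x : H, 0 ≤ ⟪T x, x⟫_ℂ) → 0 ≤ φ T)
    (hinv : ∀ T : H →L[ℂ] H,
      φ ((U : H →L[ℂ] H) ∘L T ∘L ((U.symm : H ≃ₗᵢ[ℂ] H) : H →L[ℂ] H)) = φ T)
    (T : H →L[ℂ] H) (hT : IsCompactOperator T) :
    φ T = 0 := by
  clear hpos
  have key : ∀ ε : ℝ, 0 < ε → ‖φ T‖ ≤ ‖φ‖ * ε := by
    intro ε hε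
    -- total boundedness of the image of the closed unit ball
    have hT' : IsCompactOperator (⇑(T.toLinearMap)) := by
      rwa [ContinuousLinearMap.coe_coe]
    have hK : IsCompact (closure ((T.toLinearMap : H →ₗ[ℂ] H) '' Metric.closedBall 0 1)) :=
      hT'.isCompact_closure_image_closedBall (𝕜₁ := ℂ) 1
    have htb : TotallyBounded ((T.toLinearMap : H →ₗ[ℂ] H) '' Metric.closedBall 0 1) :=
      hK.totallyBounded.subset subset_closure
    obtain ⟨s, hsfin, hcover⟩ := (Metric.totallyBounded_iff.1 htb) ε hε
    set F : Submodule ℂ H := Submodule.span ℂ s with hFdef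
    haveI : FiniteDimensional ℂ F := FiniteDimensional.span_of_finite ℂ hsfin
    set P : H →L[ℂ] H := F.subtypeL ∘L F.orthogonalProjectionOnto with hPdef
    set S : H →L[ℂ] H := P ∘L T with hSdef
    -- φ vanishes on the finite-rank operator S
    have hφS : φ S = 0 := by
      set b := stdOrthonormalBasis ℂ F with hbdef
      have hSsum : S = ∑ i, rk1 ((b i : H)) ((ContinuousLinearMap.adjoint T) (b i)) := by
        ext x
        have h1 : S x = ((F.orthogonalProjectionOnto (T x)) : H) := rfl
        rw [h1, b.orthogonalProjectionOnto_apply_eq_sum]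
        rw [ContinuousLinearMap.sum_apply]
        push_cast
        refine Finset.sum_congr rfl fun i _ => ?_
        rw [rk1_apply, ContinuousLinearMap.adjoint_inner_left]
      rw [hSsum, map_sum]
      simp only [phi_rk1 U hU φ hinv]
      simp
    -- ‖T - S‖ ≤ ε
    have hTS : ‖T - S‖ ≤ ε := by
      refine ContinuousLinearMap.opNorm_le_bound _ hε.le fun x => ?_
      rcases eq_or_ne x 0 with rfl | hx
      · simp
      · set c : ℂ := ((‖x‖ : ℝ) : ℂ) with hcdef
        have hc : ‖c‖ = ‖x‖ := by
          rw [hcdef, Complex.norm_real, norm_norm]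
        have hc0 : c ≠ 0 := by
          rw [hcdef]
          exact_mod_cast norm_ne_zero_iff.2 hx
        set y : H := c⁻¹ • x with hydef
        have hy1 : ‖y‖ ≤ 1 := by
          rw [hydef, norm_smul, norm_inv, hc,
            inv_mul_cancel₀ (norm_ne_zero_iff.2 hx)]
        have hymem : T y ∈ (T.toLinearMap : H →ₗ[ℂ] H) '' Metric.closedBall 0 1 :=
          ⟨y, by simpa [Metric.mem_closedBall] using hy1, rfl⟩
        obtain ⟨z, hzs, hzd⟩ := Set.mem_iUnion₂.1 (hcover hymem)
        have hzF : z ∈ F := Submodule.subset_span hzs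
        have hdistle : ‖T y - S y‖ ≤ ‖T y - z‖ := by
          have h1 : S y = ((F.orthogonalProjectionOnto (T y)) : H) := rfl
          rw [h1, ← Submodule.starProjection_apply, Submodule.starProjection_minimal]
          refine ciInf_le ⟨0, ?_⟩ (⟨z, hzF⟩ : F)
          rintro a ⟨w, rfl⟩
          exact norm_nonneg _
        have hyd : ‖T y - S y‖ ≤ ε := by
          refine hdistle.trans ?_
          have := Metric.mem_ball.1 hzd
          rw [dist_eq_norm] at this
          exact this.le
        have hxy : x = c • y := by
          rw [hydef, smul_smul, mul_inv_cancel₀ hc0, one_smul]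
        calc ‖(T - S) x‖ = ‖T x - S x‖ := by rw [ContinuousLinearMap.sub_apply]
          _ = ‖x‖ * ‖T y - S y‖ := by
              have h5 : T x - S x = c • (T y - S y) := by
                rw [smul_sub, ← map_smul, ← map_smul, ← hxy]
              rw [h5, norm_smul, hc]
          _ ≤ ‖x‖ * ε := mul_le_mul_of_nonneg_left hyd (norm_nonneg x)
          _ = ε * ‖x‖ := mul_comm _ _
    have : φ T = φ (T - S) + φ S := by rw [map_sub]; ring
    rw [this, hφS, add_zero]
    exact (φ.le_opNorm _).trans (mul_le_mul_of_nonneg_left hTS (norm_nonneg φ))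
  have h0 : ‖φ T‖ ≤ 0 := by
    refine le_of_forall_pos_le_add fun ε hε => ?_
    have hε' : 0 < ε / (‖φ‖ + 1) := div_pos hε (by positivity)
    have := key _ hε'
    have hφ1 : ‖φ‖ * (ε / (‖φ‖ + 1)) ≤ ε := by
      rw [div_eq_mul_inv]
      have h1 : ‖φ‖ * (ε * (‖φ‖ + 1)⁻¹) = ε * (‖φ‖ / (‖φ‖ + 1)) := by
        field_simp
      rw [h1]
      have h2 : ‖φ‖ / (‖φ‖ + 1) ≤ 1 := by
        rw [div_le_one (by positivity)]; linarith [norm_nonneg φ]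
      calc ε * (‖φ‖ / (‖φ‖ + 1)) ≤ ε * 1 := mul_le_mul_of_nonneg_left h2 hε.le
        _ = ε := mul_one ε
    linarith
  simpa using norm_le_zero_iff.1 h0
end

section
/- Let A be a unital C*-algebra, α : A → A a *-automorphism, and H, a ∈ A. Suppose there is p ∈ ℕ such that [α^j(H), α^k(H)] = 0 for all integers j, k with |j − k| ≥ p, and [α^j(H), a] = 0 for all integers j with |j| ≥ p. For m ∈ ℕ and (j₁,…,j_m) ∈ ℤ^m set c(j₁,…,j_m) = [α^{j_m}(H), [α^{j_{m−1}}(H), [⋯[α^{j₁}(H), a]⋯]]] (for m = 0, c() = a). Then: (i) for each m only finitely many tuples (j₁,…,j_m) ∈ ℤ^m give c(j₁,…,j_m) ≠ 0; and (ii) for every real R ≥ 0 the series ∑_{m=0}^∞ (R^m/m!) ∑_{(j₁,…,j_m)∈ℤ^m} ‖c(j₁,…,j_m)‖ converges. (This is the norm-summability underlying the paper's Lemma 4.4(i): the series σ^{H,I}_β(a) = ∑_{n≥0} (iβ)ⁿ/n! · δ^n_{H,I}(a) converges absolutely in norm for every β ∈ ℂ and every local operator a.) -/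
open scoped BigOperators

/-- The iterated commutator `c(j₁,…,j_m) = [α^{j_m}(H), [α^{j_{m−1}}(H), [⋯[α^{j₁}(H), a]⋯]]]`,
with `c() = a` for `m = 0`. -/
noncomputable def iterComm {A : Type*} [CStarAlgebra A] (α : A ≃ₐ[ℂ] A) (H a : A) :
    (m : ℕ) → (Fin m → ℤ) → A
  | 0, _ => a
  | (m + 1), j =>
      (α ^ (j (Fin.last m))) H * iterComm α H a m (fun i => j i.castSucc)
        - iterComm α H a m (fun i => j i.castSucc) * (α ^ (j (Fin.last m))) H

namespace IterCommAux

open Finset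

variable {A : Type*} [CStarAlgebra A]

/-- List form (outermost index first) of the iterated commutator. -/
noncomputable def cL (α : A ≃ₐ[ℂ] A) (H a : A) : List ℤ → A
  | [] => a
  | x :: l => (α ^ x) H * cL α H a l - cL α H a l * (α ^ x) H

lemma iterComm_eq_cL (α : A ≃ₐ[ℂ] A) (H a : A) :
    ∀ m (j : Fin m → ℤ), iterComm α H a m j = cL α H a (List.ofFn j).reverse := by
  intro m
  induction m with
  | zero => intro j; simp [iterComm, cL, List.ofFn_zero]
  | succ m ih =>
      intro j
      have h1 : (List.ofFn j).reverse
          = j (Fin.last m) :: (List.ofFn fun i => j i.castSucc).reverse := by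
        rw [List.ofFn_succ' j]
        simp
      rw [h1]
      show (α ^ (j (Fin.last m))) H * iterComm α H a m (fun i => j i.castSucc)
            - iterComm α H a m (fun i => j i.castSucc) * (α ^ (j (Fin.last m))) H
          = _
      rw [ih]
      rfl

section StarNorm

variable (α : A ≃ₐ[ℂ] A)

lemma star_pow_comm (hstar : ∀ b : A, α (star b) = star (α b)) :
    ∀ (n : ℕ) (b : A), (α ^ n) (star b) = star ((α ^ n) b) := by
  intro n
  induction n with
  | zero => intro b; simp
  | succ n ih => intro b; rw [pow_succ, AlgEquiv.mul_apply, AlgEquiv.mul_apply, hstar, ih]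

lemma star_zpow_comm (hstar : ∀ b : A, α (star b) = star (α b)) :
    ∀ (x : ℤ) (b : A), (α ^ x) (star b) = star ((α ^ x) b) := by
  intro x b
  cases x with
  | ofNat n => rw [Int.ofNat_eq_coe, zpow_natCast]; exact star_pow_comm α hstar n b
  | negSucc n =>
      rw [zpow_negSucc]
      have h : ((α ^ (n+1))⁻¹ : A ≃ₐ[ℂ] A) = (α ^ (n+1)).symm := rfl
      rw [h]
      apply (α ^ (n+1)).injective
      rw [star_pow_comm α hstar (n+1), (α ^ (n+1)).apply_symm_apply,
        (α ^ (n+1)).apply_symm_apply]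

/-- The zpow of a star-preserving algebra automorphism of a C*-algebra is contractive. -/
lemma norm_zpow_apply_le (hstar : ∀ b : A, α (star b) = star (α b)) (x : ℤ) (b : A) :
    ‖(α ^ x) b‖ ≤ ‖b‖ := by
  let φ : A →⋆ₐ[ℂ] A := { (α ^ x).toAlgHom with map_star' := star_zpow_comm α hstar x }
  have := NonUnitalStarAlgHom.norm_apply_le (F := A →⋆ₐ[ℂ] A) φ b
  exact this

lemma norm_cL_le (hstar : ∀ b : A, α (star b) = star (α b)) (H a : A) :
    ∀ l : List ℤ, ‖cL α H a l‖ ≤ (2 * ‖H‖) ^ l.length * ‖a‖ := by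
  intro l
  induction l with
  | nil => simp [cL]
  | cons x l ih =>
      have hx : ‖(α ^ x) H‖ ≤ ‖H‖ := norm_zpow_apply_le α hstar x H
      have h1 : ‖cL α H a (x :: l)‖
          ≤ ‖(α ^ x) H‖ * ‖cL α H a l‖ + ‖cL α H a l‖ * ‖(α ^ x) H‖ :=
        (norm_sub_le _ _).trans (add_le_add (norm_mul_le _ _) (norm_mul_le _ _))
      have h2 : ‖(α ^ x) H‖ * ‖cL α H a l‖ + ‖cL α H a l‖ * ‖(α ^ x) H‖
          ≤ 2 * ‖H‖ * ‖cL α H a l‖ := by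
        have h0 : (0:ℝ) ≤ ‖cL α H a l‖ := norm_nonneg _
        nlinarith [norm_nonneg ((α ^ x) H)]
      calc ‖cL α H a (x :: l)‖ ≤ 2 * ‖H‖ * ‖cL α H a l‖ := h1.trans h2
        _ ≤ 2 * ‖H‖ * ((2 * ‖H‖) ^ l.length * ‖a‖) := by
            apply mul_le_mul_of_nonneg_left ih
            positivity
        _ = (2 * ‖H‖) ^ (x :: l).length * ‖a‖ := by
            rw [List.length_cons, pow_succ]; ring

end StarNorm

/-! ### Hull data of a list -/

def loL (l : List ℤ) : ℤ := l.foldr min 0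
def hiL (l : List ℤ) : ℤ := l.foldr max 0

@[simp] lemma loL_nil : loL ([] : List ℤ) = 0 := rfl
@[simp] lemma hiL_nil : hiL ([] : List ℤ) = 0 := rfl
@[simp] lemma loL_cons (x : ℤ) (l : List ℤ) : loL (x :: l) = min x (loL l) := rfl
@[simp] lemma hiL_cons (x : ℤ) (l : List ℤ) : hiL (x :: l) = max x (hiL l) := rfl

lemma loL_nonpos (l : List ℤ) : loL l ≤ 0 := by
  induction l with
  | nil => simp
  | cons x l ih => simp only [loL_cons]; exact (min_le_right _ _).trans ih

lemma hiL_nonneg (l : List ℤ) : 0 ≤ hiL l := by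
  induction l with
  | nil => simp
  | cons x l ih => simp only [hiL_cons]; exact ih.trans (le_max_right _ _)

lemma loL_le_of_mem {l : List ℤ} {y : ℤ} (hy : y ∈ l) : loL l ≤ y := by
  induction l with
  | nil => simp at hy
  | cons x l ih =>
      rcases List.mem_cons.mp hy with h | h
      · simp [h]
      · exact (min_le_right _ _).trans (ih h)

lemma le_hiL_of_mem {l : List ℤ} {y : ℤ} (hy : y ∈ l) : y ≤ hiL l := by
  induction l with
  | nil => simp at hy
  | cons x l ih =>
      rcases List.mem_cons.mp hy with h | h
      · simp [h]
      · exact (ih h).trans (le_max_right _ _)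

/-! ### Candidate sets and growth count -/

/-- Candidate positions for a new outer index, given the inner list `l`. -/
noncomputable def candL (q : ℕ) (l : List ℤ) : Finset ℤ :=
  Finset.Icc (loL l - ((q : ℤ) - 1)) (hiL l + ((q : ℤ) - 1))

/-- Growth count: how many steps strictly extend the hull. -/
def γL : List ℤ → ℕ
  | [] => 0
  | x :: l => γL l + (if x < loL l ∨ hiL l < x then 1 else 0)

/-- Finite superset of the lists of length `m` with nonzero iterated commutator. -/
noncomputable def Jset (q : ℕ) : ℕ → Finset (List ℤ)
  | 0 => {[]}
  | m + 1 => (Jset q m).biUnion (fun l => (candL q l).image (· :: l))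

lemma length_of_mem_Jset (q : ℕ) : ∀ m, ∀ l ∈ Jset q m, l.length = m := by
  intro m
  induction m with
  | zero => intro l hl; simp [Jset] at hl; simp [hl]
  | succ m ih =>
      intro l hl
      simp only [Jset, Finset.mem_biUnion, Finset.mem_image] at hl
      obtain ⟨l', hl', x, _, rfl⟩ := hl
      simp [ih l' hl']

lemma γL_le_length : ∀ l : List ℤ, γL l ≤ l.length := by
  intro l
  induction l with
  | nil => simp [γL]
  | cons x l ih =>
      simp only [γL, List.length_cons]
      split <;> omega

lemma hull_width_of_mem_Jset (q : ℕ) :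
    ∀ m, ∀ l ∈ Jset q m, hiL l - loL l ≤ ((q : ℤ) - 1) * γL l := by
  intro m
  induction m with
  | zero => intro l hl; simp [Jset] at hl; simp [hl, γL]
  | succ m ih =>
      intro l hl
      simp only [Jset, Finset.mem_biUnion, Finset.mem_image] at hl
      obtain ⟨l', hl', x, hx, rfl⟩ := hl
      have hw := ih l' hl'
      have hlh : loL l' ≤ hiL l' := (loL_nonpos l').trans (hiL_nonneg l')
      simp only [candL, Finset.mem_Icc] at hx
      by_cases hg : x < loL l' ∨ hiL l' < x
      · have hγ : (γL (x :: l') : ℤ) = γL l' + 1 := by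
          simp only [γL, if_pos hg]; push_cast; ring
        have : hiL (x :: l') - loL (x :: l') ≤ hiL l' - loL l' + ((q:ℤ) - 1) := by
          simp only [hiL_cons, loL_cons]
          omega
        calc hiL (x :: l') - loL (x :: l') ≤ hiL l' - loL l' + ((q:ℤ) - 1) := this
          _ ≤ ((q:ℤ) - 1) * γL l' + ((q:ℤ)-1) := by omega
          _ = ((q:ℤ) - 1) * (γL (x :: l')) := by rw [hγ]; ring
      · push_neg at hg
        have hγ : γL (x :: l') = γL l' := by
          simp only [γL, if_neg (show ¬(x < loL l' ∨ hiL l' < x) by omega)]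
          omega
        have hlo : loL (x :: l') = loL l' := by simp only [loL_cons]; omega
        have hhi : hiL (x :: l') = hiL l' := by simp only [hiL_cons]; omega
        rw [hγ, hlo, hhi]; exact hw

/-! ### Vanishing lemma -/

section Vanish

variable (α : A ≃ₐ[ℂ] A) (H a : A) (p : ℕ)

lemma commute_far
    (hHH : ∀ j k : ℤ, (p : ℤ) ≤ |j - k| →
      (α ^ j) H * (α ^ k) H - (α ^ k) H * (α ^ j) H = 0)
    (hHa : ∀ j : ℤ, (p : ℤ) ≤ |j| → (α ^ j) H * a - a * (α ^ j) H = 0) {x : ℤ} :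
    ∀ l : List ℤ, (∀ y ∈ (0 : ℤ) :: l, (p : ℤ) ≤ |x - y|) →
      Commute ((α ^ x) H) (cL α H a l) := by
  intro l
  induction l with
  | nil =>
      intro hfar
      have h0 := hfar 0 (List.mem_cons_self)
      simp only [sub_zero] at h0
      exact sub_eq_zero.mp (hHa x h0)
  | cons y l ih =>
      intro hfar
      have hy : (p : ℤ) ≤ |x - y| := hfar y (List.mem_cons_of_mem _ (List.mem_cons_self))
      have h1 : Commute ((α ^ x) H) ((α ^ y) H) := sub_eq_zero.mp (hHH x y hy)
      have h2 : Commute ((α ^ x) H) (cL α H a l) := by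
        apply ih
        intro z hz
        rcases List.mem_cons.mp hz with rfl | hz
        · exact hfar _ (List.mem_cons_self)
        · exact hfar z (List.mem_cons_of_mem _ (List.mem_cons_of_mem _ hz))
      exact ((h1.mul_right h2).sub_right (h2.mul_right h1))

lemma ne_zero_cons
    (hHH : ∀ j k : ℤ, (p : ℤ) ≤ |j - k| →
      (α ^ j) H * (α ^ k) H - (α ^ k) H * (α ^ j) H = 0)
    (hHa : ∀ j : ℤ, (p : ℤ) ≤ |j| → (α ^ j) H * a - a * (α ^ j) H = 0)
    {q : ℕ} (hpq : (p : ℤ) ≤ (q : ℤ)) {x : ℤ} {l : List ℤ}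
    (h : cL α H a (x :: l) ≠ 0) : x ∈ candL q l ∧ cL α H a l ≠ 0 := by
  constructor
  · by_contra hx
    apply h
    have hfar : ∀ y ∈ (0 : ℤ) :: l, (p : ℤ) ≤ |x - y| := by
      intro y hy
      have hylo : loL l ≤ y ∧ y ≤ hiL l := by
        rcases List.mem_cons.mp hy with rfl | hy
        · exact ⟨loL_nonpos l, hiL_nonneg l⟩
        · exact ⟨loL_le_of_mem hy, le_hiL_of_mem hy⟩
      simp only [candL, Finset.mem_Icc, not_and_or, not_le] at hx
      have : (q : ℤ) ≤ |x - y| := by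
        rcases hx with hx | hx
        · rw [abs_sub_comm]
          have : (q:ℤ) ≤ y - x := by omega
          exact this.trans (le_abs_self _)
        · have : (q:ℤ) ≤ x - y := by omega
          exact this.trans (le_abs_self _)
      exact hpq.trans this
    have hc := commute_far α H a p hHH hHa l hfar
    show (α ^ x) H * cL α H a l - cL α H a l * (α ^ x) H = 0
    rw [hc.eq, sub_self]
  · intro h0
    apply h
    show (α ^ x) H * cL α H a l - cL α H a l * (α ^ x) H = 0
    rw [h0, mul_zero, zero_mul, sub_zero]

lemma mem_Jset_of_ne_zero
    (hHH : ∀ j k : ℤ, (p : ℤ) ≤ |j - k| →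
      (α ^ j) H * (α ^ k) H - (α ^ k) H * (α ^ j) H = 0)
    (hHa : ∀ j : ℤ, (p : ℤ) ≤ |j| → (α ^ j) H * a - a * (α ^ j) H = 0)
    {q : ℕ} (hpq : (p : ℤ) ≤ (q : ℤ)) :
    ∀ l : List ℤ, cL α H a l ≠ 0 → l ∈ Jset q l.length := by
  intro l
  induction l with
  | nil => intro _; simp [Jset]
  | cons x l ih =>
      intro h
      obtain ⟨hx, hl⟩ := ne_zero_cons α H a p hHH hHa hpq h
      simp only [List.length_cons, Jset, Finset.mem_biUnion]
      exact ⟨l, ih hl, Finset.mem_image.mpr ⟨x, hx, rfl⟩⟩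

end Vanish

/-! ### Counting -/

/-- The counting bound `C(m,g) (2q)^m (g+1)^(m-g)`. -/
def Fc (q m g : ℕ) : ℕ := m.choose g * (2 * q) ^ m * (g + 1) ^ (m - g)

lemma Fc_step (q m g' : ℕ) (hq : 1 ≤ q) :
    q * (g' + 2) * Fc q m (g' + 1) + 2 * q * Fc q m g' ≤ Fc q (m + 1) (g' + 1) := by
  rcases le_or_gt (g' + 1) m with hgm | hgm
  · obtain ⟨k, hk1, hk2⟩ : ∃ k, m - (g' + 1) = k ∧ m - g' = k + 1 :=
      ⟨m - g' - 1, by omega, by omega⟩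
    have h1 : q * (g' + 2) * Fc q m (g' + 1)
        = q * (m.choose (g' + 1) * (2 * q) ^ m * (g' + 2) ^ (m - g')) := by
      unfold Fc
      rw [hk1, hk2, pow_succ]
      ring
    have h2 : 2 * q * Fc q m g' ≤ 2 * q * (m.choose g' * (2 * q) ^ m * (g' + 2) ^ (m - g')) := by
      unfold Fc
      apply Nat.mul_le_mul_left
      apply Nat.mul_le_mul_left
      exact Nat.pow_le_pow_left (by omega) _
    have h3 : q * (m.choose (g' + 1) * (2 * q) ^ m * (g' + 2) ^ (m - g'))
        + 2 * q * (m.choose g' * (2 * q) ^ m * (g' + 2) ^ (m - g'))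
        ≤ Fc q (m + 1) (g' + 1) := by
      unfold Fc
      rw [Nat.choose_succ_succ m g', (show m + 1 - (g' + 1) = m - g' by omega), pow_succ]
      have hY : q * (m.choose (g' + 1) * (2 * q) ^ m * (g' + 2) ^ (m - g'))
          ≤ 2 * q * (m.choose (g' + 1) * (2 * q) ^ m * (g' + 2) ^ (m - g')) := by
        apply Nat.mul_le_mul_right
        omega
      calc q * (m.choose (g' + 1) * (2 * q) ^ m * (g' + 2) ^ (m - g'))
            + 2 * q * (m.choose g' * (2 * q) ^ m * (g' + 2) ^ (m - g'))
          ≤ 2 * q * (m.choose (g' + 1) * (2 * q) ^ m * (g' + 2) ^ (m - g'))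
            + 2 * q * (m.choose g' * (2 * q) ^ m * (g' + 2) ^ (m - g')) := by omega
        _ = (m.choose g' + m.choose (g' + 1)) * ((2 * q) ^ m * (2 * q)) * (g' + 1 + 1) ^ (m - g') := by
            ring
    omega
  · rcases Nat.lt_or_ge g' m with h | h
    · omega
    · rcases Nat.eq_or_lt_of_le h with rfl | h2
      · have hz : Fc q m (m + 1) = 0 := by
          unfold Fc; rw [Nat.choose_eq_zero_of_lt (by omega)]; ring
        have he1 : Fc q m m = (2 * q) ^ m := by unfold Fc; simp
        have he2 : Fc q (m + 1) (m + 1) = (2 * q) ^ (m + 1) := by unfold Fc; simp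
        rw [hz, he1, he2, pow_succ]
        calc q * (m + 2) * 0 + 2 * q * (2 * q) ^ m = (2 * q) ^ m * (2 * q) := by ring
          _ ≤ (2 * q) ^ m * (2 * q) := le_refl _
      · have hz1 : Fc q m (g' + 1) = 0 := by
          unfold Fc; rw [Nat.choose_eq_zero_of_lt (by omega)]; ring
        have hz2 : Fc q m g' = 0 := by
          unfold Fc; rw [Nat.choose_eq_zero_of_lt (by omega)]; ring
        simp [hz1, hz2]

lemma card_Jset_filter (q : ℕ) (hq : 1 ≤ q) :
    ∀ m g, ((Jset q m).filter (fun l => γL l = g)).card ≤ Fc q m g := by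
  intro m
  induction m with
  | zero =>
      intro g
      rcases Nat.eq_zero_or_pos g with rfl | hg
      · calc ((Jset q 0).filter _).card ≤ (Jset q 0).card := Finset.card_filter_le _ _
          _ = 1 := by simp [Jset]
          _ ≤ Fc q 0 0 := by unfold Fc; simp
      · have : ((Jset q 0).filter (fun l => γL l = g)) = ∅ := by
          apply Finset.filter_false_of_mem
          intro l hl
          simp [Jset] at hl
          subst hl
          simp [γL]; omega
        rw [this]; simp
  | succ m ih =>
      intro g
      rw [Jset, Finset.filter_biUnion]
      refine le_trans (Finset.card_biUnion_le) ?_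
      -- per-element bound
      have hper : ∀ l ∈ Jset q m,
          (((candL q l).image (· :: l)).filter (fun l' => γL l' = g)).card
          ≤ (if γL l = g then (q - 1) * g + 1 else 0)
            + (if γL l + 1 = g then 2 * (q - 1) else 0) := by
        intro l hl
        rw [Finset.filter_image]
        rw [Finset.card_image_of_injective _ (fun u v huv => by
          simpa using congrArg (fun t : List ℤ => t.head?) huv)]
        have hwidth := hull_width_of_mem_Jset q m l hl
        have hlh : loL l ≤ hiL l := (loL_nonpos l).trans (hiL_nonneg l)
        by_cases h1 : γL l = g
        · -- non-growth only
          rw [if_pos h1, if_neg (by omega)]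
          have hsub : (candL q l).filter (fun x => γL (x :: l) = g)
              ⊆ Finset.Icc (loL l) (hiL l) := by
            intro x hx
            simp only [Finset.mem_filter] at hx
            obtain ⟨-, hx2⟩ := hx
            simp only [γL] at hx2
            rw [Finset.mem_Icc]
            by_cases hg : x < loL l ∨ hiL l < x
            · rw [if_pos hg] at hx2; omega
            · push_neg at hg; exact hg
          calc ((candL q l).filter _).card ≤ (Finset.Icc (loL l) (hiL l)).card :=
              Finset.card_le_card hsub
            _ = (hiL l + 1 - loL l).toNat := Int.card_Icc _ _
            _ ≤ (q - 1) * g + 1 := by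
                rw [Int.toNat_le]
                push_cast
                have hcast : ((q : ℤ) - 1) = ((q - 1 : ℕ) : ℤ) := by
                  have : (1:ℤ) ≤ (q:ℤ) := by exact_mod_cast hq
                  push_cast [Nat.cast_sub hq]; ring
                rw [← h1]
                calc hiL l + 1 - loL l ≤ ((q:ℤ) - 1) * γL l + 1 := by omega
                  _ = ((q - 1 : ℕ) : ℤ) * γL l + 1 := by rw [hcast]
        · rw [if_neg h1]
          by_cases h2 : γL l + 1 = g
          · rw [if_pos h2]
            have hsub : (candL q l).filter (fun x => γL (x :: l) = g)
                ⊆ Finset.Icc (loL l - ((q:ℤ) - 1)) (loL l - 1)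
                  ∪ Finset.Icc (hiL l + 1) (hiL l + ((q:ℤ) - 1)) := by
              intro x hx
              simp only [Finset.mem_filter, candL, Finset.mem_Icc] at hx
              obtain ⟨hx1, hx2⟩ := hx
              simp only [γL] at hx2
              by_cases hg : x < loL l ∨ hiL l < x
              · rw [if_pos hg] at hx2
                simp only [Finset.mem_union, Finset.mem_Icc]
                rcases hg with h | h
                · exact Or.inl ⟨hx1.1, by omega⟩
                · exact Or.inr ⟨by omega, hx1.2⟩
              · rw [if_neg hg] at hx2; omega
            calc ((candL q l).filter _).card
                ≤ (Finset.Icc (loL l - ((q:ℤ) - 1)) (loL l - 1)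
                  ∪ Finset.Icc (hiL l + 1) (hiL l + ((q:ℤ) - 1))).card :=
                  Finset.card_le_card hsub
              _ ≤ (Finset.Icc (loL l - ((q:ℤ) - 1)) (loL l - 1)).card
                  + (Finset.Icc (hiL l + 1) (hiL l + ((q:ℤ) - 1))).card :=
                  Finset.card_union_le _ _
              _ ≤ (q - 1) + (q - 1) := by
                  apply add_le_add
                  · rw [Int.card_Icc, Int.toNat_le]
                    push_cast [Nat.cast_sub hq]
                    omega
                  · rw [Int.card_Icc, Int.toNat_le]
                    push_cast [Nat.cast_sub hq]
                    omega
              _ = 2 * (q - 1) := by ring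
              _ ≤ 0 + 2 * (q - 1) := by omega
          · rw [if_neg h2]
            have : (candL q l).filter (fun x => γL (x :: l) = g) = ∅ := by
              apply Finset.filter_false_of_mem
              intro x hx
              simp only [γL]
              split <;> omega
            rw [this]; simp
      refine le_trans (Finset.sum_le_sum hper) ?_
      rw [Finset.sum_add_distrib]
      have e1 : ∑ l ∈ Jset q m, (if γL l = g then (q - 1) * g + 1 else 0)
          = ((Jset q m).filter (fun l => γL l = g)).card * ((q - 1) * g + 1) := by
        rw [← Finset.sum_filter, Finset.sum_const, smul_eq_mul]
      have e2 : ∑ l ∈ Jset q m, (if γL l + 1 = g then 2 * (q - 1) else 0)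
          = ((Jset q m).filter (fun l => γL l + 1 = g)).card * (2 * (q - 1)) := by
        rw [← Finset.sum_filter, Finset.sum_const, smul_eq_mul]
      rw [e1, e2]
      rcases Nat.eq_zero_or_pos g with rfl | hg
      · -- g = 0 : no growth contribution
        have hc := ih 0
        have hFc0 : Fc q m 0 = (2 * q) ^ m := by unfold Fc; simp
        have hFc0' : Fc q (m + 1) 0 = (2 * q) ^ (m + 1) := by unfold Fc; simp
        rw [hFc0] at hc
        have hmono : (2 * q) ^ m ≤ (2 * q) ^ (m + 1) :=
          Nat.pow_le_pow_right (by omega) (by omega)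
        calc ((Jset q m).filter (fun l => γL l = 0)).card * ((q - 1) * 0 + 1)
              + ((Jset q m).filter (fun l => γL l + 1 = 0)).card * (2 * (q - 1))
            = ((Jset q m).filter (fun l => γL l = 0)).card
              + ((Jset q m).filter (fun l => γL l + 1 = 0)).card * (2 * (q - 1)) := by ring
          _ = ((Jset q m).filter (fun l => γL l = 0)).card := by
              have : ((Jset q m).filter (fun l => γL l + 1 = 0)).card = 0 := by simp
              rw [this]; ring
          _ ≤ (2 * q) ^ m := hc
          _ ≤ (2 * q) ^ (m + 1) := hmono
          _ = Fc q (m + 1) 0 := hFc0'.symm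
      · obtain ⟨g', rfl⟩ : ∃ g', g = g' + 1 := ⟨g - 1, by omega⟩
        have hb1 : ((Jset q m).filter (fun l => γL l = g' + 1)).card * ((q - 1) * (g'+1) + 1)
            ≤ Fc q m (g' + 1) * (q * (g' + 2)) := by
          apply Nat.mul_le_mul (ih (g' + 1))
          obtain ⟨q'', rfl⟩ : ∃ q'', q = q'' + 1 := ⟨q - 1, by omega⟩
          simp only [Nat.add_sub_cancel]
          nlinarith
        have hb2 : ((Jset q m).filter (fun l => γL l + 1 = g' + 1)).card * (2 * (q - 1))
            ≤ Fc q m g' * (2 * q) := by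
          have : ((Jset q m).filter (fun l => γL l + 1 = g' + 1))
              = ((Jset q m).filter (fun l => γL l = g')) := by
            apply Finset.filter_congr
            intro l _
            constructor <;> (intro h; omega)
          rw [this]
          apply Nat.mul_le_mul (ih g')
          omega
        have := Fc_step q m g' hq
        calc _ ≤ Fc q m (g'+1) * (q * (g'+2)) + Fc q m g' * (2*q) := add_le_add hb1 hb2
          _ = q * (g' + 2) * Fc q m (g'+1) + 2 * q * Fc q m g' := by ring
          _ ≤ Fc q (m+1) (g'+1) := this

lemma card_Jset_le (q : ℕ) (hq : 1 ≤ q) (m : ℕ) :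
    (Jset q m).card ≤ ∑ g ∈ Finset.range (m + 1), Fc q m g := by
  have hmap : ∀ l ∈ Jset q m, γL l ∈ Finset.range (m + 1) := by
    intro l hl
    rw [Finset.mem_range]
    have := γL_le_length l
    rw [length_of_mem_Jset q m l hl] at this
    omega
  rw [Finset.card_eq_sum_card_fiberwise hmap]
  exact Finset.sum_le_sum (fun g _ => card_Jset_filter q hq m g)

/-! ### Analytic estimate -/

lemma summable_psi (K : ℝ) (hK : 0 ≤ K) :
    Summable (fun m : ℕ => ∑ g ∈ Finset.range (m + 1),
      K ^ g / (Nat.factorial g) * ((K * (g + 1)) ^ (m - g) / (Nat.factorial (m - g)))) := by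
  set ψ : ℕ → ℕ → ℝ :=
    fun g n => K ^ g / (Nat.factorial g) * ((K * (g + 1)) ^ n / (Nat.factorial n)) with hψ
  have hψnn : ∀ g n, 0 ≤ ψ g n := by
    intro g n
    apply mul_nonneg <;> positivity
  apply summable_of_sum_range_le (c := Real.exp K * Real.exp (K * Real.exp K))
  · intro m
    apply Finset.sum_nonneg
    intro g _
    exact hψnn g (m - g)
  · intro M
    have h1 : ∀ m : ℕ, ∑ g ∈ Finset.range (m + 1), ψ g (m - g)
        = ∑ ij ∈ Finset.HasAntidiagonal.antidiagonal m, ψ ij.1 ij.2 := by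
      intro m
      simpa using
        (Finset.Nat.sum_antidiagonal_eq_sum_range_succ_mk (fun ij => ψ ij.1 ij.2) m).symm
    calc ∑ m ∈ Finset.range M, ∑ g ∈ Finset.range (m + 1), ψ g (m - g)
        = ∑ m ∈ Finset.range M, ∑ ij ∈ Finset.HasAntidiagonal.antidiagonal m, ψ ij.1 ij.2 := by
          exact Finset.sum_congr rfl (fun m _ => h1 m)
      _ = ∑ ij ∈ (Finset.range M).biUnion Finset.HasAntidiagonal.antidiagonal, ψ ij.1 ij.2 := by
          rw [Finset.sum_biUnion]
          intro i _ j _ hij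
          apply Finset.disjoint_left.mpr
          intro ij h1 h2
          rw [Finset.HasAntidiagonal.mem_antidiagonal] at h1 h2
          omega
      _ ≤ ∑ ij ∈ Finset.range M ×ˢ Finset.range M, ψ ij.1 ij.2 := by
          apply Finset.sum_le_sum_of_subset_of_nonneg
          · intro ij hij
            simp only [Finset.mem_biUnion, Finset.mem_range] at hij
            obtain ⟨m, hm, hij⟩ := hij
            rw [Finset.HasAntidiagonal.mem_antidiagonal] at hij
            simp only [Finset.mem_product, Finset.mem_range]
            omega
          · intro ij _ _
            exact hψnn ij.1 ij.2
      _ = ∑ g ∈ Finset.range M, ∑ n ∈ Finset.range M, ψ g n := by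
          rw [Finset.sum_product]
      _ ≤ ∑ g ∈ Finset.range M, K ^ g / (Nat.factorial g) * Real.exp (K * (g + 1)) := by
          apply Finset.sum_le_sum
          intro g _
          rw [hψ]
          simp only
          rw [← Finset.mul_sum]
          apply mul_le_mul_of_nonneg_left _ (by positivity)
          exact Real.sum_le_exp_of_nonneg (by positivity) M
      _ ≤ Real.exp K * Real.exp (K * Real.exp K) := by
          have heq : ∀ g : ℕ, K ^ g / (Nat.factorial g) * Real.exp (K * (g + 1))
              = Real.exp K * ((K * Real.exp K) ^ g / (Nat.factorial g)) := by
            intro g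
            have : K * (g + 1) = (g : ℕ) * K + K := by ring
            rw [this, Real.exp_add, Real.exp_nat_mul, mul_pow]
            ring
          calc ∑ g ∈ Finset.range M, K ^ g / (Nat.factorial g) * Real.exp (K * (g + 1))
              = Real.exp K * ∑ g ∈ Finset.range M, (K * Real.exp K) ^ g / (Nat.factorial g) := by
                rw [Finset.mul_sum]
                exact Finset.sum_congr rfl (fun g _ => heq g)
            _ ≤ Real.exp K * Real.exp (K * Real.exp K) := by
                apply mul_le_mul_of_nonneg_left _ (Real.exp_nonneg K)
                exact Real.sum_le_exp_of_nonneg (by positivity) M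

end IterCommAux

/-- Norm-summability of the iterated commutators of a "local" Hamiltonian: if
`[α^j(H), α^k(H)] = 0` for `|j − k| ≥ p` and `[α^j(H), a] = 0` for `|j| ≥ p`, then for
each `m` only finitely many tuples give a nonzero iterated commutator, and for every
`R ≥ 0` the series `∑_m (R^m/m!) ∑_{(j₁,…,j_m)} ‖c(j₁,…,j_m)‖` converges. -/
theorem iterComm_summable
    {A : Type*} [CStarAlgebra A] (α : A ≃ₐ[ℂ] A)
    (hstar : ∀ a : A, α (star a) = star (α a))
    (H a : A) (p : ℕ)
    (hHH : ∀ j k : ℤ, (p : ℤ) ≤ |j - k| →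
      (α ^ j) H * (α ^ k) H - (α ^ k) H * (α ^ j) H = 0)
    (hHa : ∀ j : ℤ, (p : ℤ) ≤ |j| → (α ^ j) H * a - a * (α ^ j) H = 0) :
    (∀ m : ℕ, {j : Fin m → ℤ | iterComm α H a m j ≠ 0}.Finite) ∧
    (∀ R : ℝ, 0 ≤ R →
      Summable (fun m : ℕ =>
        (R ^ m / m.factorial) * ∑' j : Fin m → ℤ, ‖iterComm α H a m j‖)) := by
  classical
  open IterCommAux in
  set q : ℕ := max p 1 with hqdef
  have hq1 : 1 ≤ q := le_max_right _ _
  have hpq : (p : ℤ) ≤ (q : ℤ) := by exact_mod_cast le_max_left p 1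
  -- the list encoding
  set Lmap : ∀ m : ℕ, (Fin m → ℤ) → List ℤ := fun m j => (List.ofFn j).reverse with hLmap
  have hLinj : ∀ m, Function.Injective (Lmap m) := by
    intro m j j' h
    have := List.reverse_injective h
    exact List.ofFn_injective this
  have hLlen : ∀ m (j : Fin m → ℤ), (Lmap m j).length = m := by
    intro m j
    simp [hLmap]
  have hceq : ∀ m (j : Fin m → ℤ), iterComm α H a m j = cL α H a (Lmap m j) :=
    fun m j => iterComm_eq_cL α H a m j
  -- membership of nonzero tuples in Jset
  have hmem : ∀ m (j : Fin m → ℤ), iterComm α H a m j ≠ 0 → Lmap m j ∈ Jset q m := by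
    intro m j hj
    rw [hceq] at hj
    have := mem_Jset_of_ne_zero α H a p hHH hHa (q := q) hpq (Lmap m j) hj
    rwa [hLlen] at this
  -- part (i)
  have hfin : ∀ m : ℕ, {j : Fin m → ℤ | iterComm α H a m j ≠ 0}.Finite := by
    intro m
    apply Set.Finite.subset (Set.Finite.preimage ((hLinj m).injOn)
      (Jset q m).finite_toSet)
    intro j hj
    exact hmem m j hj
  refine ⟨hfin, ?_⟩
  intro R hR
  set K : ℝ := R * (2 * ‖H‖) * (2 * q) with hKdef
  have hK : 0 ≤ K := by positivity
  -- comparison term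
  have hcomp : ∀ m : ℕ,
      (R ^ m / m.factorial) * ∑' j : Fin m → ℤ, ‖iterComm α H a m j‖
      ≤ ‖a‖ * ∑ g ∈ Finset.range (m + 1),
          K ^ g / (Nat.factorial g) * ((K * (g + 1)) ^ (m - g) / (Nat.factorial (m - g))) := by
    intro m
    set s : Finset (Fin m → ℤ) := (hfin m).toFinset with hs
    have htsum : ∑' j : Fin m → ℤ, ‖iterComm α H a m j‖
        = ∑ j ∈ s, ‖iterComm α H a m j‖ := by
      apply tsum_eq_sum
      intro j hj
      rw [hs, Set.Finite.mem_toFinset] at hj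
      simp only [Set.mem_setOf_eq, not_not] at hj
      rw [hj, norm_zero]
    have hbound : ∀ j ∈ s, ‖iterComm α H a m j‖ ≤ (2 * ‖H‖) ^ m * ‖a‖ := by
      intro j _
      rw [hceq]
      have := norm_cL_le α hstar H a (Lmap m j)
      rwa [hLlen] at this
    have hcard : s.card ≤ (Jset q m).card := by
      apply Finset.card_le_card_of_injOn (Lmap m)
      · intro j hj
        rw [hs, Finset.mem_coe, Set.Finite.mem_toFinset] at hj
        exact hmem m j hj
      · exact (hLinj m).injOn
    have h1 : ∑' j : Fin m → ℤ, ‖iterComm α H a m j‖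
        ≤ ((Jset q m).card : ℝ) * ((2 * ‖H‖) ^ m * ‖a‖) := by
      rw [htsum]
      calc ∑ j ∈ s, ‖iterComm α H a m j‖ ≤ s.card • ((2 * ‖H‖) ^ m * ‖a‖) :=
          Finset.sum_le_card_nsmul s _ _ hbound
        _ = (s.card : ℝ) * ((2 * ‖H‖) ^ m * ‖a‖) := by rw [nsmul_eq_mul]
        _ ≤ ((Jset q m).card : ℝ) * ((2 * ‖H‖) ^ m * ‖a‖) := by
            apply mul_le_mul_of_nonneg_right _ (by positivity)
            exact_mod_cast hcard
    have h2 : ((Jset q m).card : ℝ) ≤ ∑ g ∈ Finset.range (m + 1), (Fc q m g : ℝ) := by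
      rw [← Nat.cast_sum]
      exact_mod_cast card_Jset_le q hq1 m
    have hRfm : 0 ≤ R ^ m / (m.factorial : ℝ) := by positivity
    calc (R ^ m / m.factorial) * ∑' j : Fin m → ℤ, ‖iterComm α H a m j‖
        ≤ (R ^ m / m.factorial) * (((Jset q m).card : ℝ) * ((2 * ‖H‖) ^ m * ‖a‖)) := by
          apply mul_le_mul_of_nonneg_left h1 hRfm
      _ ≤ (R ^ m / m.factorial) *
          ((∑ g ∈ Finset.range (m + 1), (Fc q m g : ℝ)) * ((2 * ‖H‖) ^ m * ‖a‖)) := by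
          apply mul_le_mul_of_nonneg_left _ hRfm
          apply mul_le_mul_of_nonneg_right h2 (by positivity)
      _ = ∑ g ∈ Finset.range (m + 1),
            (R ^ m / m.factorial) * ((Fc q m g : ℝ) * ((2 * ‖H‖) ^ m * ‖a‖)) := by
          rw [Finset.sum_mul, Finset.mul_sum]
      _ = ‖a‖ * ∑ g ∈ Finset.range (m + 1),
            K ^ g / (Nat.factorial g) * ((K * (g + 1)) ^ (m - g) / (Nat.factorial (m - g))) := by
          rw [Finset.mul_sum]
          apply Finset.sum_congr rfl
          intro g hg
          have hgm : g ≤ m := by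
            rw [Finset.mem_range] at hg; omega
          obtain ⟨n, rfl⟩ : ∃ n, m = g + n := ⟨m - g, by omega⟩
          rw [Nat.add_sub_cancel_left]
          have hchoose : (((g + n).choose g : ℕ) : ℝ)
              = ((g + n).factorial : ℝ) / ((g.factorial : ℝ) * (n.factorial : ℝ)) := by
            rw [Nat.cast_choose ℝ (by omega : g ≤ g + n), Nat.add_sub_cancel_left]
          have hFc : ((Fc q (g + n) g : ℕ) : ℝ)
              = (((g + n).choose g : ℕ) : ℝ) * (2 * (q : ℝ)) ^ (g + n) * ((g : ℝ) + 1) ^ n := by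
            unfold Fc
            rw [Nat.add_sub_cancel_left]
            push_cast
            ring
          have hf1 : (g.factorial : ℝ) ≠ 0 := by
            exact_mod_cast (Nat.factorial_pos g).ne'
          have hf2 : (n.factorial : ℝ) ≠ 0 := by
            exact_mod_cast (Nat.factorial_pos n).ne'
          have hf3 : (((g + n).factorial : ℕ) : ℝ) ≠ 0 := by
            exact_mod_cast (Nat.factorial_pos (g + n)).ne'
          rw [mul_pow K ((g : ℝ) + 1) n, hFc, hchoose, hKdef]
          generalize (2 * ‖H‖ : ℝ) = u
          generalize (2 * (q : ℝ)) = v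
          field_simp
          ring
  -- conclude by comparison
  have hnn : ∀ m : ℕ, 0 ≤ (R ^ m / m.factorial) * ∑' j : Fin m → ℤ, ‖iterComm α H a m j‖ := by
    intro m
    apply mul_nonneg (by positivity)
    exact tsum_nonneg (fun j => norm_nonneg _)
  exact Summable.of_nonneg_of_le hnn hcomp ((summable_psi K hK).mul_left ‖a‖)
end
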